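/- arXiv:0804.4046 — 11 statements merged into one kernel-verified Lean document; each statement's English description precedes it below -/
import Mathlib

section
/- Let (Ω, μ) be a probability space, let N ≥ 1, and for each site n ∈ {1,…,N} let S_n ≥ 1. For each n and each setting s ∈ {1,…,S_n} let Λ_n^{(s)} be a measurable space, X_n^{(s)} : Ω → Λ_n^{(s)} a measurable map, and φ_n^{(s)} : Λ_n^{(s)} → ℝ a bounded measurable function. For each n let Φ_n ⊆ ℝ^{S_n} be the range of the vector-valued map λ ↦ (φ_n^{(1)}(λ^{(1)}),…,φ_n^{(S_n)}(λ^{(S_n)})) as λ = (λ^{(1)},…,λ^{(S_n)}) ranges over Λ_n^{(1)} × ⋯ × Λ_n^{(S_n)}. Then for any real coefficients γ_{(s_1,…,s_N)}: inf over (ξ_1,…,ξ_N) ∈ Φ_1 × ⋯ × Φ_N of ∑_{s_1,…,s_N} γ_{(s_1,…,s_N)} ξ_1^{(s_1)} ⋯ ξ_N^{(s_N)} ≤ ∑_{s_1,…,s_N} γ_{(s_1,…,s_N)} ∫_Ω φ_1^{(s_1)}(X_1^{(s_1)}(ω)) ⋯ φ_N^{(s_N)}(X_N^{(s_N)}(ω))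 dμ(ω) ≤ sup over (ξ_1,…,ξ_N) ∈ Φ_1 × ⋯ × Φ_N of the same N-linear expression. -/
open MeasureTheory

/-! For every `ω` the vector `(φ n t (X n t ω))` lies in `Φ₁ × ⋯ × Φ_N`, so the integrand
`ω ↦ F (φ n t (X n t ω))` is squeezed pointwise between the infimum and the supremum of `F` on
that set; integrating against the probability measure `μ` and using linearity of the integral gives
both inequalities. Boundedness of the `φ n t` makes the constraint set bounded, hence so is its
image under the continuous map `F`, which gives both the finiteness of `sInf`/`sSup` and the
integrability of every term. -/

open Bornology Set

lemma Bornology.IsBounded.image_of_continuous {E F : Type*} [PseudoMetricSpace E] [ProperSpace E]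
    [PseudoMetricSpace F] {f : E → F} (hf : Continuous f) {s : Set E} (hs : IsBounded s) :
    IsBounded (f '' s) :=
  (hs.isCompact_closure.image hf).isBounded.subset (image_mono subset_closure)

lemma isBounded_range_piMap {ι : Type*} [Fintype ι] {α : ι → Type*} {ψ : (i : ι) → α i → ℝ}
    (hψ : ∀ i, ∃ C, ∀ x, |ψ i x| ≤ C) : IsBounded (range (Pi.map ψ)) := by
  rw [range_piMap]
  refine IsBounded.pi fun i => ?_
  obtain ⟨C, hC⟩ := hψ i
  exact isBounded_iff_forall_norm_le.2 ⟨C, forall_mem_range.2 hC⟩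

namespace MeasureTheory

variable {Ω : Type*} [MeasurableSpace Ω] {μ : Measure Ω}

lemma integrable_comp_of_isBounded_range [IsFiniteMeasure μ] {E : Type*} [PseudoMetricSpace E]
    [ProperSpace E] [MeasurableSpace E] [OpensMeasurableSpace E] {v : Ω → E} (hv : Measurable v)
    (hbdd : IsBounded (range v)) {f : E → ℝ} (hf : Continuous f) :
    Integrable (fun ω => f (v ω)) μ := by
  obtain ⟨C, hC⟩ := isBounded_iff_forall_norm_le.1 (hbdd.image_of_continuous hf)
  refine .of_bound (hf.measurable.comp hv).aestronglyMeasurable C (ae_of_all _ fun ω => ?_)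
  exact hC _ ⟨v ω, mem_range_self ω, rfl⟩

variable [IsProbabilityMeasure μ] {A : Set ℝ} {g : Ω → ℝ}

lemma csInf_le_integral_of_forall_mem (hA : BddBelow A) (hg : Integrable g μ)
    (hgA : ∀ ω, g ω ∈ A) : sInf A ≤ ∫ ω, g ω ∂μ := by
  simpa using integral_mono (integrable_const (sInf A)) hg fun ω => csInf_le hA (hgA ω)

lemma integral_le_csSup_of_forall_mem (hA : BddAbove A) (hg : Integrable g μ)
    (hgA : ∀ ω, g ω ∈ A) : ∫ ω, g ω ∂μ ≤ sSup A := by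
  simpa using integral_mono hg (integrable_const (sSup A)) fun ω => le_csSup hA (hgA ω)

end MeasureTheory

theorem stmt_1_general {Ω : Type*} [MeasurableSpace Ω] (μ : Measure Ω) [IsProbabilityMeasure μ]
    (N : ℕ) (S : Fin N → ℕ)
    (Λ : (n : Fin N) → Fin (S n) → Type*)
    [∀ n s, MeasurableSpace (Λ n s)]
    (X : (n : Fin N) → (s : Fin (S n)) → Ω → Λ n s)
    (hX : ∀ n s, Measurable (X n s))
    (φ : (n : Fin N) → (s : Fin (S n)) → Λ n s → ℝ)
    (hφmeas : ∀ n s, Measurable (φ n s))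
    (hφbd : ∀ n s, ∃ C : ℝ, ∀ x, |φ n s x| ≤ C)
    (γ : ((n : Fin N) → Fin (S n)) → ℝ) :
    let Φ : (n : Fin N) → Set (Fin (S n) → ℝ) := fun n =>
      Set.range (fun (lam : (t : Fin (S n)) → Λ n t) => fun t => φ n t (lam t))
    let F : ((n : Fin N) → Fin (S n) → ℝ) → ℝ := fun ξ =>
      ∑ s : (n : Fin N) → Fin (S n), γ s * ∏ n, ξ n (s n)
    (sInf (F '' {ξ | ∀ n, ξ n ∈ Φ n}) ≤
      ∑ s : (n : Fin N) → Fin (S n), γ s * ∫ ω, ∏ n, φ n (s n) (X n (s n) ω) ∂μ) ∧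
    ((∑ s : (n : Fin N) → Fin (S n), γ s * ∫ ω, ∏ n, φ n (s n) (X n (s n) ω) ∂μ) ≤
      sSup (F '' {ξ | ∀ n, ξ n ∈ Φ n})) := by
  intro Φ F
  set K : Set ((n : Fin N) → Fin (S n) → ℝ) := {ξ | ∀ n, ξ n ∈ Φ n}
  set v : Ω → (n : Fin N) → Fin (S n) → ℝ := fun ω n t => φ n t (X n t ω)
  have hv : Measurable v := by fun_prop
  have hK : IsBounded K :=
    (IsBounded.pi fun n => isBounded_range_piMap (hφbd n)).subset fun ξ hξ n _ => hξ n
  have hvK : ∀ ω, v ω ∈ K := fun ω n => ⟨fun t => X n t ω, rfl⟩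
  have hF : Continuous F := by fun_prop
  have hFK : IsBounded (F '' K) := hK.image_of_continuous hF
  have hv_range : IsBounded (range v) := hK.subset (range_subset_iff.2 hvK)
  have hFv_mem : ∀ ω, F (v ω) ∈ F '' K := fun ω => mem_image_of_mem F (hvK ω)
  have hFv : Integrable (fun ω => F (v ω)) μ := integrable_comp_of_isBounded_range hv hv_range hF
  have hF_integral : ∫ ω, F (v ω) ∂μ =
      ∑ s : (n : Fin N) → Fin (S n), γ s * ∫ ω, ∏ n, φ n (s n) (X n (s n) ω) ∂μ := by
    have hterm : ∀ s : (n : Fin N) → Fin (S n), Integrable (fun ω => ∏ n, v ω n (s n)) μ :=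
      fun s => integrable_comp_of_isBounded_range hv hv_range
        (f := fun ξ => ∏ n, ξ n (s n)) (by fun_prop)
    rw [integral_finsetSum _ fun s _ => (hterm s).const_mul (γ s)]
    exact Finset.sum_congr rfl fun s _ => integral_const_mul _ _
  rw [← hF_integral]
  exact ⟨csInf_le_integral_of_forall_mem hFK.bddBelow hFv hFv_mem,
    integral_le_csSup_of_forall_mem hFK.bddAbove hFv hFv_mem⟩

/-- Theorem 1, inequality (9): the tight linear LHV constraint on product expectations.
`Φ n` is the range of the vector-valued map `λ ↦ (φ n 1 (λ 1), …, φ n Sₙ (λ Sₙ))`. -/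
theorem stmt_1 {Ω : Type*} [MeasurableSpace Ω] (μ : Measure Ω) [IsProbabilityMeasure μ]
    (N : ℕ) (hN : 1 ≤ N) (S : Fin N → ℕ) (hS : ∀ n, 1 ≤ S n)
    (Λ : (n : Fin N) → Fin (S n) → Type*)
    [∀ n s, MeasurableSpace (Λ n s)]
    (X : (n : Fin N) → (s : Fin (S n)) → Ω → Λ n s)
    (hX : ∀ n s, Measurable (X n s))
    (φ : (n : Fin N) → (s : Fin (S n)) → Λ n s → ℝ)
    (hφmeas : ∀ n s, Measurable (φ n s))
    (hφbd : ∀ n s, ∃ C : ℝ, ∀ x, |φ n s x| ≤ C)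
    (γ : ((n : Fin N) → Fin (S n)) → ℝ) :
    let Φ : (n : Fin N) → Set (Fin (S n) → ℝ) := fun n =>
      Set.range (fun (lam : (t : Fin (S n)) → Λ n t) => fun t => φ n t (lam t))
    let F : ((n : Fin N) → Fin (S n) → ℝ) → ℝ := fun ξ =>
      ∑ s : (n : Fin N) → Fin (S n), γ s * ∏ n, ξ n (s n)
    (sInf (F '' {ξ | ∀ n, ξ n ∈ Φ n}) ≤
      ∑ s : (n : Fin N) → Fin (S n), γ s * ∫ ω, ∏ n, φ n (s n) (X n (s n) ω) ∂μ) ∧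
    ((∑ s : (n : Fin N) → Fin (S n), γ s * ∫ ω, ∏ n, φ n (s n) (X n (s n) ω) ∂μ) ≤
      sSup (F '' {ξ | ∀ n, ξ n ∈ Φ n})) :=
  stmt_1_general μ N S Λ X hX φ hφmeas hφbd γ
end

section
/- Let (Ω, μ) be a probability space, N ≥ 1, and for each site n ∈ {1,…,N} and each setting s ∈ {1,…,S_n} let X_n^{(s)} : Ω → ℝ be a measurable function with values in a set Λ_n^{(s)} ⊆ [-1,1] satisfying sup Λ_n^{(s)} = 1 and inf Λ_n^{(s)} = -1. For arbitrary real coefficients γ_{(s_{n_1},…,s_{n_M})} indexed by nonempty subsets {n_1 < ⋯ < n_M} ⊆ {1,…,N} and setting choices s_{n_m} ∈ {1,…,S_{n_m}}, define W(η_1,…,η_N) = ∑_{M=1}^{N} ∑_{n_1<⋯<n_M} ∑_{s_{n_1},…,s_{n_M}} γ_{(s_{n_1},…,s_{n_M})} η_{n_1}^{(s_{n_1})} ⋯ η_{n_M}^{(s_{n_M})}. Then min over (η_1,…,η_N) ∈ {-1,1}^{S_1} × ⋯ × {-1,1}^{S_N} of W ≤ ∑_{M=1}^{N} ∑_{n_1<⋯<n_M}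 ∑_{s_{n_1},…,s_{n_M}} γ_{(s_{n_1},…,s_{n_M})} ∫_Ω X_{n_1}^{(s_{n_1})} ⋯ X_{n_M}^{(s_{n_M})} dμ ≤ max over (η_1,…,η_N) ∈ {-1,1}^{S_1} × ⋯ × {-1,1}^{S_N} of W. -/
/-
The correlation sum is the expectation of `W(X(ω))`, and `W` is affine in each of the
variables `η_n^{(s)}` separately, because every monomial uses each site at most once and each
site with a single setting. A multiaffine function on the cube `[-1,1]^I` is the convex
combination of its vertex values with the product weights `∏ᵢ (1 ± xᵢ)/2`, so pointwise
`W(X(ω))` lies between the least and the largest vertex value, and integrating over the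
probability measure `μ` keeps it there.
-/

open MeasureTheory Finset

lemma exists_le_sum_mul {ι : Type*} [Fintype ι] [Nonempty ι] {w : ι → ℝ}
    (hw : ∀ i, 0 ≤ w i) (hsum : ∑ i, w i = 1) (v : ι → ℝ) :
    ∃ i, v i ≤ ∑ j, w j * v j := by
  obtain ⟨i, hi⟩ := Finite.exists_min v
  refine ⟨i, ?_⟩
  calc v i = ∑ j, w j * v i := by rw [← sum_mul, hsum, one_mul]
    _ ≤ ∑ j, w j * v j := sum_le_sum fun j _ => mul_le_mul_of_nonneg_left (hi j) (hw j)

lemma exists_sum_mul_le {ι : Type*} [Fintype ι] [Nonempty ι] {w : ι → ℝ}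
    (hw : ∀ i, 0 ≤ w i) (hsum : ∑ i, w i = 1) (v : ι → ℝ) :
    ∃ i, ∑ j, w j * v j ≤ v i := by
  obtain ⟨i, hi⟩ := exists_le_sum_mul hw hsum (-v)
  exact ⟨i, by simpa [mul_neg, sum_neg_distrib] using hi⟩

namespace Cube

variable {I : Type*}

def vertex (ε : I → Bool) (i : I) : ℝ := if ε i then 1 else -1

variable [Fintype I]

/-- The weight of the vertex `ε` in the multilinear interpolation at `x`: the probability of
`ε` when the coordinates are independent signs with means `x i`. -/
noncomputable def weight (x : I → ℝ) (ε : I → Bool) : ℝ :=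
  ∏ i, if ε i then (1 + x i) / 2 else (1 - x i) / 2

lemma weight_nonneg {x : I → ℝ} (hx : ∀ i, x i ∈ Set.Icc (-1 : ℝ) 1) (ε : I → Bool) :
    0 ≤ weight x ε :=
  prod_nonneg fun i _ => by
    obtain ⟨h₁, h₂⟩ := hx i
    split <;> linarith

variable [DecidableEq I]

lemma sum_weight_mul_prod_vertex (x : I → ℝ) (A : Finset I) :
    ∑ ε, weight x ε * ∏ i ∈ A, vertex ε i = ∏ i ∈ A, x i := by
  set g : I → Bool → ℝ := fun i b =>
    (if b then (1 + x i) / 2 else (1 - x i) / 2) * (if i ∈ A then (if b then 1 else -1) else 1)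
  have hfactor : ∀ ε, weight x ε * ∏ i ∈ A, vertex ε i = ∏ i, g i (ε i) := fun ε => by
    rw [weight, ← prod_ite_mem_eq A, ← prod_mul_distrib]
    rfl
  have hcoord : ∀ i, ∑ b, g i b = if i ∈ A then x i else 1 := fun i => by
    by_cases hi : i ∈ A <;>
      simp only [g, hi, Fintype.sum_bool, if_true, if_false, Bool.false_eq_true] <;> ring
  rw [sum_congr rfl fun ε _ => hfactor ε, ← Fintype.prod_sum, prod_congr rfl fun i _ => hcoord i,
    prod_ite_mem, univ_inter]

lemma sum_weight (x : I → ℝ) : ∑ ε, weight x ε = 1 := by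
  simpa using sum_weight_mul_prod_vertex x ∅

/-- Multiaffine functions, characterised as those reproduced by multilinear
interpolation of their values at the vertices of `[-1,1]^I`. -/
def IsMultiaffine (f : (I → ℝ) → ℝ) : Prop :=
  ∀ x, f x = ∑ ε, weight x ε * f (vertex ε)

lemma isMultiaffine_prod_comp {K : Type*} [Fintype K] {σ : K → I} (hσ : Function.Injective σ) :
    IsMultiaffine fun x => ∏ k, x (σ k) := by
  intro x
  simpa only [prod_map, Function.Embedding.coeFn_mk] using
    (sum_weight_mul_prod_vertex x (univ.map ⟨σ, hσ⟩)).symm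

lemma IsMultiaffine.const_mul {f : (I → ℝ) → ℝ} (hf : IsMultiaffine f) (c : ℝ) :
    IsMultiaffine fun x => c * f x := by
  intro x
  dsimp only
  rw [hf x, mul_sum]
  exact sum_congr rfl fun ε _ => mul_left_comm _ _ _

lemma IsMultiaffine.sum {ι : Type*} {s : Finset ι} {f : ι → (I → ℝ) → ℝ}
    (hf : ∀ j ∈ s, IsMultiaffine (f j)) : IsMultiaffine fun x => ∑ j ∈ s, f j x := by
  intro x
  simp only [mul_sum]
  rw [sum_comm]
  exact sum_congr rfl fun j hj => hf j hj x

lemma IsMultiaffine.exists_vertex_le {f : (I → ℝ) → ℝ} (hf : IsMultiaffine f) {x : I → ℝ}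
    (hx : ∀ i, x i ∈ Set.Icc (-1 : ℝ) 1) : ∃ ε, f (vertex ε) ≤ f x :=
  hf x ▸ exists_le_sum_mul (weight_nonneg hx) (sum_weight x) _

lemma IsMultiaffine.exists_le_vertex {f : (I → ℝ) → ℝ} (hf : IsMultiaffine f) {x : I → ℝ}
    (hx : ∀ i, x i ∈ Set.Icc (-1 : ℝ) 1) : ∃ ε, f x ≤ f (vertex ε) :=
  hf x ▸ exists_sum_mul_le (weight_nonneg hx) (sum_weight x) _

end Cube

section Integration

variable {Ω : Type*} [MeasurableSpace Ω] {μ : Measure Ω}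

lemma integrable_prod_of_abs_le_one [IsFiniteMeasure μ] {ι : Type*} {s : Finset ι}
    {f : ι → Ω → ℝ} (hf : ∀ i ∈ s, Measurable (f i)) (hbound : ∀ i ∈ s, ∀ ω, |f i ω| ≤ 1) :
    Integrable (fun ω => ∏ i ∈ s, f i ω) μ := by
  refine .of_bound (Finset.measurable_prod _ hf).aestronglyMeasurable 1 (ae_of_all _ fun ω => ?_)
  rw [Real.norm_eq_abs, abs_prod]
  exact prod_le_one (fun i _ => abs_nonneg _) fun i hi => hbound i hi ω

lemma const_le_integral_of_forall_le [IsProbabilityMeasure μ] {f : Ω → ℝ} (hf : Integrable f μ)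
    {c : ℝ} (h : ∀ ω, c ≤ f ω) : c ≤ ∫ ω, f ω ∂μ := by
  simpa using integral_mono (integrable_const c) hf h

lemma integral_le_const_of_forall_le [IsProbabilityMeasure μ] {f : Ω → ℝ} (hf : Integrable f μ)
    {c : ℝ} (h : ∀ ω, f ω ≤ c) : ∫ ω, f ω ∂μ ≤ c := by
  simpa using integral_mono hf (integrable_const c) h

end Integration

theorem stmt_4_general {Ω : Type*} [MeasurableSpace Ω] (μ : Measure Ω) [IsProbabilityMeasure μ]
    (N : ℕ) (S : Fin N → ℕ)
    (Λ : (n : Fin N) → Fin (S n) → Set ℝ)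
    (hΛ : ∀ n s, Λ n s ⊆ Set.Icc (-1 : ℝ) 1)
    (X : (n : Fin N) → Fin (S n) → Ω → ℝ)
    (hX : ∀ n s, Measurable (X n s))
    (hrange : ∀ n s ω, X n s ω ∈ Λ n s)
    (γ : (T : Finset (Fin N)) → ((n : T) → Fin (S n.1)) → ℝ) :
    let W : ((n : Fin N) → Fin (S n) → ℝ) → ℝ := fun η =>
      ∑ T ∈ Finset.univ.powerset.filter (fun T : Finset (Fin N) => T.Nonempty),
        ∑ s : (n : T) → Fin (S n.1), γ T s * ∏ n : T, η n.1 (s n)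
    ((⨅ ε : (n : Fin N) → Fin (S n) → Bool,
        W (fun n t => if ε n t then 1 else -1)) ≤
      ∑ T ∈ Finset.univ.powerset.filter (fun T : Finset (Fin N) => T.Nonempty),
        ∑ s : (n : T) → Fin (S n.1), γ T s * ∫ ω, ∏ n : T, X n.1 (s n) ω ∂μ) ∧
    ((∑ T ∈ Finset.univ.powerset.filter (fun T : Finset (Fin N) => T.Nonempty),
        ∑ s : (n : T) → Fin (S n.1), γ T s * ∫ ω, ∏ n : T, X n.1 (s n) ω ∂μ) ≤
      ⨆ ε : (n : Fin N) → Fin (S n) → Bool,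
        W (fun n t => if ε n t then 1 else -1)) := by
  intro W
  have hW : Cube.IsMultiaffine fun x : (Σ n, Fin (S n)) → ℝ => W (fun n t => x ⟨n, t⟩) :=
    .sum fun T _ => .sum fun s _ => .const_mul (Cube.isMultiaffine_prod_comp
      (σ := fun n : T => (⟨n.1, s n⟩ : Σ n, Fin (S n)))
      fun _ _ h => Subtype.ext (congrArg Sigma.fst h)) _
  have hcube : ∀ ω, ∀ i : Σ n, Fin (S n), X i.1 i.2 ω ∈ Set.Icc (-1 : ℝ) 1 :=
    fun ω i => hΛ i.1 i.2 (hrange i.1 i.2 ω)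
  have hint : ∀ (T : Finset (Fin N)) (s : (n : T) → Fin (S n.1)),
      Integrable (fun ω => γ T s * ∏ n : T, X n.1 (s n) ω) μ := fun T s =>
    (integrable_prod_of_abs_le_one (fun n _ => hX n.1 (s n))
      fun n _ ω => abs_le.mpr (hcube ω ⟨n.1, s n⟩)).const_mul _
  have hcorr : ∑ T ∈ Finset.univ.powerset.filter (fun T : Finset (Fin N) => T.Nonempty),
      ∑ s : (n : T) → Fin (S n.1), γ T s * ∫ ω, ∏ n : T, X n.1 (s n) ω ∂μ =
      ∫ ω, W (fun n t => X n t ω) ∂μ := by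
    rw [integral_finsetSum _ fun T _ => integrable_finsetSum _ fun s _ => hint T s]
    refine sum_congr rfl fun T _ => ?_
    rw [integral_finsetSum _ fun s _ => hint T s]
    exact sum_congr rfl fun s _ => (integral_const_mul _ _).symm
  have hWint : Integrable (fun ω => W (fun n t => X n t ω)) μ :=
    integrable_finsetSum _ fun T _ => integrable_finsetSum _ fun s _ => hint T s
  have hfin := Set.finite_range fun ε : (n : Fin N) → Fin (S n) → Bool =>
    W (fun n t => if ε n t then 1 else -1)
  rw [hcorr]
  refine ⟨const_le_integral_of_forall_le hWint fun ω => ?_,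
    integral_le_const_of_forall_le hWint fun ω => ?_⟩
  · obtain ⟨ε, hε⟩ := hW.exists_vertex_le (hcube ω)
    exact (ciInf_le hfin.bddBelow (Sigma.curry ε)).trans hε
  · obtain ⟨ε, hε⟩ := hW.exists_le_vertex (hcube ω)
    exact hε.trans (le_ciSup hfin.bddAbove (Sigma.curry ε))

/-- Corollary 1: the tight linear LHV constraint on all correlation functions. The
coefficients `γ` are indexed by nonempty subsets `T` of sites together with a setting
choice at each site of `T`; the bounds are the extrema of the corresponding sum of
multilinear forms over the vertices `{-1,1}^{S₁} × ⋯ × {-1,1}^{S_N}`. -/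
theorem stmt_4 {Ω : Type*} [MeasurableSpace Ω] (μ : Measure Ω) [IsProbabilityMeasure μ]
    (N : ℕ) (hN : 1 ≤ N) (S : Fin N → ℕ) (hS : ∀ n, 1 ≤ S n)
    (Λ : (n : Fin N) → Fin (S n) → Set ℝ)
    (hΛ : ∀ n s, Λ n s ⊆ Set.Icc (-1 : ℝ) 1)
    (hsup : ∀ n s, sSup (Λ n s) = 1) (hinf : ∀ n s, sInf (Λ n s) = -1)
    (X : (n : Fin N) → Fin (S n) → Ω → ℝ)
    (hX : ∀ n s, Measurable (X n s))
    (hrange : ∀ n s ω, X n s ω ∈ Λ n s)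
    (γ : (T : Finset (Fin N)) → ((n : T) → Fin (S n.1)) → ℝ) :
    let W : ((n : Fin N) → Fin (S n) → ℝ) → ℝ := fun η =>
      ∑ T ∈ Finset.univ.powerset.filter (fun T : Finset (Fin N) => T.Nonempty),
        ∑ s : (n : T) → Fin (S n.1), γ T s * ∏ n : T, η n.1 (s n)
    ((⨅ ε : (n : Fin N) → Fin (S n) → Bool,
        W (fun n t => if ε n t then 1 else -1)) ≤
      ∑ T ∈ Finset.univ.powerset.filter (fun T : Finset (Fin N) => T.Nonempty),
        ∑ s : (n : T) → Fin (S n.1), γ T s * ∫ ω, ∏ n : T, X n.1 (s n) ω ∂μ) ∧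
    ((∑ T ∈ Finset.univ.powerset.filter (fun T : Finset (Fin N) => T.Nonempty),
        ∑ s : (n : T) → Fin (S n.1), γ T s * ∫ ω, ∏ n : T, X n.1 (s n) ω ∂μ) ≤
      ⨆ ε : (n : Fin N) → Fin (S n) → Bool,
        W (fun n t => if ε n t then 1 else -1)) :=
  stmt_4_general μ N S Λ hΛ X hX hrange γ
end

section
/- Let (Ω, μ) be a probability space, N ≥ 1, and for each site n ∈ {1,…,N} and each setting s ∈ {1,…,S_n} let X_n^{(s)} : Ω → ℝ be a measurable function with values in a set Λ_n^{(s)} ⊆ [-1,1] satisfying sup Λ_n^{(s)} = 1 and inf Λ_n^{(s)} = -1. Then for any real coefficients γ_{(s_1,…,s_N)}: | ∑_{s_1,…,s_N} γ_{(s_1,…,s_N)} ∫_Ω X_1^{(s_1)} ⋯ X_N^{(s_N)} dμ | ≤ max over η_1 ∈ {-1,1}^{S_1}, …, η_N ∈ {-1,1}^{S_N} of | ∑_{s_1,…,s_N} γ_{(s_1,…,s_N)} η_1^{(s_1)} ⋯ η_N^{(s_N)} |. -/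
/-!
For `y` in the cube `[-1,1]^{Σ S_n}`, give each vertex `ε` the product weight
`∏ (1 ± y_{n,s}) / 2`, i.e. let the coordinates be independent `±1` signs with means `y_{n,s}`.
Each monomial `∏_n y_{n,s_n}` involves distinct coordinates, so it is the weighted average of
its values at the vertices; hence `F(y)` is a convex combination of the `F(ε)` and
`|F(y)| ≤ max_ε |F(ε)|`. Applying this pointwise on `Ω` to `y = X(ω)` and integrating against
the probability measure `μ` gives the bound.
-/

open MeasureTheory

noncomputable section

section VertexDecomposition

def boolSign (b : Bool) : ℝ := if b then 1 else -1

variable {ι : Type*} [Fintype ι] {κ : ι → Type*} [∀ i, Fintype (κ i)]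

def fullCorrelationForm [DecidableEq ι] (γ : ((i : ι) → κ i) → ℝ) (y : (i : ι) → κ i → ℝ) : ℝ :=
  ∑ s : (i : ι) → κ i, γ s * ∏ i, y i (s i)

def vertexWeight (y : (i : ι) → κ i → ℝ) (ε : (i : ι) → κ i → Bool) : ℝ :=
  ∏ i, ∏ k, if ε i k then (1 + y i k) / 2 else (1 - y i k) / 2

lemma sum_prod_prod_bool [DecidableEq ι] [∀ i, DecidableEq (κ i)]
    (g : (i : ι) → κ i → Bool → ℝ) :
    ∑ ε : (i : ι) → κ i → Bool, ∏ i, ∏ k, g i k (ε i k) =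
      ∏ i, ∏ k, (g i k true + g i k false) := by
  simp only [← Fintype.sum_bool, Fintype.prod_sum]

variable {y : (i : ι) → κ i → ℝ}

lemma vertexWeight_nonneg (hy : ∀ i k, y i k ∈ Set.Icc (-1 : ℝ) 1)
    (ε : (i : ι) → κ i → Bool) : 0 ≤ vertexWeight y ε := by
  refine Finset.prod_nonneg fun i _ => Finset.prod_nonneg fun k _ => ?_
  have := hy i k
  split_ifs <;> linarith [this.1, this.2]

variable [DecidableEq ι] [∀ i, DecidableEq (κ i)]

lemma sum_vertexWeight : ∑ ε, vertexWeight y ε = 1 := by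
  simp only [vertexWeight]
  rw [sum_prod_prod_bool fun i k b => if b then (1 + y i k) / 2 else (1 - y i k) / 2]
  exact Finset.prod_eq_one fun i _ => Finset.prod_eq_one fun k _ => by
    simp only [↓reduceIte, Bool.false_eq_true]; ring

lemma sum_vertexWeight_mul_prod_boolSign (s : (i : ι) → κ i) :
    ∑ ε, vertexWeight y ε * ∏ i, boolSign (ε i (s i)) = ∏ i, y i (s i) := by
  have hsign (ε : (i : ι) → κ i → Bool) : ∏ i, boolSign (ε i (s i)) =
      ∏ i, ∏ k, if k = s i then boolSign (ε i k) else 1 := by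
    simp
  simp only [hsign, vertexWeight, ← Finset.prod_mul_distrib]
  rw [sum_prod_prod_bool fun i k b => (if b then (1 + y i k) / 2 else (1 - y i k) / 2) *
    if k = s i then boolSign b else 1]
  refine Finset.prod_congr rfl fun i _ => ?_
  trans ∏ k, if k = s i then y i k else 1
  · refine Finset.prod_congr rfl fun k _ => ?_
    simp only [boolSign, ↓reduceIte, Bool.false_eq_true]
    split_ifs <;> ring
  · simp

lemma fullCorrelationForm_eq_sum_vertexWeight_mul (γ : ((i : ι) → κ i) → ℝ)
    (y : (i : ι) → κ i → ℝ) :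
    fullCorrelationForm γ y =
      ∑ ε, vertexWeight y ε * fullCorrelationForm γ fun i k => boolSign (ε i k) := by
  simp only [fullCorrelationForm, Finset.mul_sum]
  rw [Finset.sum_comm]
  refine Finset.sum_congr rfl fun s _ => ?_
  rw [← sum_vertexWeight_mul_prod_boolSign s, Finset.mul_sum]
  exact Finset.sum_congr rfl fun ε _ => by ring

lemma abs_fullCorrelationForm_le_iSup (γ : ((i : ι) → κ i) → ℝ)
    (hy : ∀ i k, y i k ∈ Set.Icc (-1 : ℝ) 1) :
    |fullCorrelationForm γ y| ≤
      ⨆ ε : (i : ι) → κ i → Bool, |fullCorrelationForm γ fun i k => boolSign (ε i k)| := by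
  set F := fun ε : (i : ι) → κ i → Bool => |fullCorrelationForm γ fun i k => boolSign (ε i k)|
  have hle_iSup (ε : (i : ι) → κ i → Bool) : F ε ≤ ⨆ ε, F ε := le_ciSup (Set.finite_range F).bddAbove ε
  calc |fullCorrelationForm γ y|
      ≤ ∑ ε, vertexWeight y ε * |fullCorrelationForm γ fun i k => boolSign (ε i k)| := by
        rw [fullCorrelationForm_eq_sum_vertexWeight_mul]
        refine (Finset.abs_sum_le_sum_abs _ _).trans_eq (Finset.sum_congr rfl fun ε _ => ?_)
        rw [abs_mul, abs_of_nonneg (vertexWeight_nonneg hy ε)]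
    _ ≤ ∑ ε, vertexWeight y ε * ⨆ ε, F ε :=
        Finset.sum_le_sum fun ε _ => mul_le_mul_of_nonneg_left (hle_iSup ε) (vertexWeight_nonneg hy ε)
    _ = ⨆ ε, F ε := by rw [← Finset.sum_mul, sum_vertexWeight, one_mul]

end VertexDecomposition

section Integration

variable {Ω : Type*} [MeasurableSpace Ω] {μ : Measure Ω} {ι : Type*} [Fintype ι]

lemma integrable_prod_of_mem_Icc [IsFiniteMeasure μ] {f : ι → Ω → ℝ} (hf : ∀ i, Measurable (f i))
    (hf_mem : ∀ i ω, f i ω ∈ Set.Icc (-1 : ℝ) 1) : Integrable (fun ω => ∏ i, f i ω) μ := by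
  refine .of_bound (Finset.measurable_prod _ fun i _ => hf i).aestronglyMeasurable 1
    (ae_of_all _ fun ω => ?_)
  rw [Real.norm_eq_abs, Finset.abs_prod]
  exact Finset.prod_le_one (fun i _ => abs_nonneg _) fun i _ => abs_le.mpr (hf_mem i ω)

lemma sum_mul_integral_eq_integral_fullCorrelationForm [IsFiniteMeasure μ] [DecidableEq ι]
    {κ : ι → Type*} [∀ i, Fintype (κ i)] (γ : ((i : ι) → κ i) → ℝ) {X : (i : ι) → κ i → Ω → ℝ}
    (hX : ∀ i k, Measurable (X i k)) (hX_mem : ∀ i k ω, X i k ω ∈ Set.Icc (-1 : ℝ) 1) :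
    ∑ s : (i : ι) → κ i, γ s * ∫ ω, ∏ i, X i (s i) ω ∂μ =
      ∫ ω, fullCorrelationForm γ (fun i k => X i k ω) ∂μ := by
  simp only [fullCorrelationForm]
  rw [integral_finsetSum _ fun s _ =>
    (integrable_prod_of_mem_Icc (fun i => hX i (s i)) fun i => hX_mem i (s i)).const_mul (γ s)]
  exact Finset.sum_congr rfl fun s _ => (integral_const_mul _ _).symm

end Integration
end

theorem stmt_5_general {Ω : Type*} [MeasurableSpace Ω] (μ : Measure Ω) [IsProbabilityMeasure μ]
    (N : ℕ) (S : Fin N → ℕ)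
    (Λ : (n : Fin N) → Fin (S n) → Set ℝ)
    (hΛ : ∀ n s, Λ n s ⊆ Set.Icc (-1 : ℝ) 1)
    (X : (n : Fin N) → Fin (S n) → Ω → ℝ)
    (hX : ∀ n s, Measurable (X n s))
    (hrange : ∀ n s ω, X n s ω ∈ Λ n s)
    (γ : ((n : Fin N) → Fin (S n)) → ℝ) :
    |∑ s : (n : Fin N) → Fin (S n), γ s * ∫ ω, ∏ n, X n (s n) ω ∂μ| ≤
      ⨆ ε : (n : Fin N) → Fin (S n) → Bool,
        |∑ s : (n : Fin N) → Fin (S n),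
          γ s * ∏ n, (if ε n (s n) then (1 : ℝ) else -1)| := by
  have hX_mem (n : Fin N) (s : Fin (S n)) (ω : Ω) : X n s ω ∈ Set.Icc (-1 : ℝ) 1 :=
    hΛ n s (hrange n s ω)
  rw [sum_mul_integral_eq_integral_fullCorrelationForm γ hX hX_mem]
  have := norm_integral_le_of_norm_le_const (μ := μ) (ae_of_all _ fun ω =>
    (Real.norm_eq_abs _).trans_le (abs_fullCorrelationForm_le_iSup γ fun n s => hX_mem n s ω))
  rwa [probReal_univ, mul_one, Real.norm_eq_abs] at this

/-- Corollary 2: the tight linear LHV constraint on full correlation functions, in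
absolute-value form; the bound is the maximum of `|F_N^{(γ)}|` over the vertices
`{-1,1}^{S₁} × ⋯ × {-1,1}^{S_N}`. -/
theorem stmt_5 {Ω : Type*} [MeasurableSpace Ω] (μ : Measure Ω) [IsProbabilityMeasure μ]
    (N : ℕ) (hN : 1 ≤ N) (S : Fin N → ℕ) (hS : ∀ n, 1 ≤ S n)
    (Λ : (n : Fin N) → Fin (S n) → Set ℝ)
    (hΛ : ∀ n s, Λ n s ⊆ Set.Icc (-1 : ℝ) 1)
    (hsup : ∀ n s, sSup (Λ n s) = 1) (hinf : ∀ n s, sInf (Λ n s) = -1)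
    (X : (n : Fin N) → Fin (S n) → Ω → ℝ)
    (hX : ∀ n s, Measurable (X n s))
    (hrange : ∀ n s ω, X n s ω ∈ Λ n s)
    (γ : ((n : Fin N) → Fin (S n)) → ℝ) :
    |∑ s : (n : Fin N) → Fin (S n), γ s * ∫ ω, ∏ n, X n (s n) ω ∂μ| ≤
      ⨆ ε : (n : Fin N) → Fin (S n) → Bool,
        |∑ s : (n : Fin N) → Fin (S n),
          γ s * ∏ n, (if ε n (s n) then (1 : ℝ) else -1)| :=
  stmt_5_general μ N S Λ hΛ X hX hrange γ
end

section
/- Let (Ω, μ) be a probability space and let f_1, f_2, g_1, g_2 : Ω → ℝ be measurable functions with |f_i(ω)| ≤ 1 and |g_k(ω)| ≤ 1 for all ω ∈ Ω and i, k ∈ {1,2}. Then | ∫_Ω f_1 g_1 dμ + ∫_Ω f_1 g_2 dμ + ∫_Ω f_2 g_1 dμ − ∫_Ω f_2 g_2 dμ | ≤ 2. -/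
/-! Pointwise, `f₁g₁ + f₁g₂ + f₂g₁ - f₂g₂ = f₁(g₁ + g₂) + f₂(g₁ - g₂)` has absolute value at
most `|g₁ + g₂| + |g₁ - g₂| = 2 max |g₁| |g₂| ≤ 2`; the integrands are bounded, hence
integrable, so the bound passes to the integral of the combination against a probability
measure. -/

open MeasureTheory

theorem abs_add_add_abs_sub_le_two {b b' : ℝ} (hb : |b| ≤ 1) (hb' : |b'| ≤ 1) :
    |b + b'| + |b - b'| ≤ 2 := by
  obtain ⟨hb₁, hb₂⟩ := abs_le.mp hb
  obtain ⟨hb'₁, hb'₂⟩ := abs_le.mp hb'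
  rcases abs_cases (b + b') with ⟨h₁, _⟩ | ⟨h₁, _⟩ <;>
    rcases abs_cases (b - b') with ⟨h₂, _⟩ | ⟨h₂, _⟩ <;>
    · rw [h₁, h₂]
      linarith

theorem abs_chsh_le_two {a a' b b' : ℝ} (ha : |a| ≤ 1) (ha' : |a'| ≤ 1) (hb : |b| ≤ 1)
    (hb' : |b'| ≤ 1) :
    |a * b + a * b' + a' * b - a' * b'| ≤ 2 :=
  calc |a * b + a * b' + a' * b - a' * b'|
      = |a * (b + b') + a' * (b - b')| := by congr 1; ring
    _ ≤ |a| * |b + b'| + |a'| * |b - b'| := (abs_add_le _ _).trans_eq (by rw [abs_mul, abs_mul])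
    _ ≤ |b + b'| + |b - b'| := by
      gcongr
      · exact mul_le_of_le_one_left (abs_nonneg _) ha
      · exact mul_le_of_le_one_left (abs_nonneg _) ha'
    _ ≤ 2 := abs_add_add_abs_sub_le_two hb hb'

theorem integrable_mul_of_abs_le_one {Ω : Type*} [MeasurableSpace Ω] (μ : Measure Ω)
    [IsFiniteMeasure μ] {f g : Ω → ℝ} (hf : Measurable f) (hg : Measurable g)
    (hbf : ∀ ω, |f ω| ≤ 1) (hbg : ∀ ω, |g ω| ≤ 1) :
    Integrable (fun ω => f ω * g ω) μ :=
  .of_bound (hf.mul hg).aestronglyMeasurable 1 <| .of_forall fun ω => by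
    simpa [abs_mul] using mul_le_one₀ (hbf ω) (abs_nonneg _) (hbg ω)

theorem abs_integral_le_of_forall_abs_le {Ω : Type*} [MeasurableSpace Ω] (μ : Measure Ω)
    [IsProbabilityMeasure μ] {F : Ω → ℝ} {C : ℝ} (hF : ∀ ω, |F ω| ≤ C) :
    |∫ ω, F ω ∂μ| ≤ C := by
  simpa using norm_integral_le_of_norm_le_const (μ := μ) (f := F) (.of_forall hF)

/-- The Clauser-Horne-Shimony-Holt (CHSH) inequality (45), for outcomes in `[-1,1]` of
any spectral type: for measurable `f₁, f₂, g₁, g₂ : Ω → ℝ` bounded by `1` in absolute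
value on a probability space `(Ω, μ)`,
`|⟨f₁g₁⟩ + ⟨f₁g₂⟩ + ⟨f₂g₁⟩ − ⟨f₂g₂⟩| ≤ 2`. -/
theorem stmt_8 {Ω : Type*} [MeasurableSpace Ω] (μ : Measure Ω) [IsProbabilityMeasure μ]
    (f₁ f₂ g₁ g₂ : Ω → ℝ)
    (hf₁ : Measurable f₁) (hf₂ : Measurable f₂)
    (hg₁ : Measurable g₁) (hg₂ : Measurable g₂)
    (hbf₁ : ∀ ω, |f₁ ω| ≤ 1) (hbf₂ : ∀ ω, |f₂ ω| ≤ 1)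
    (hbg₁ : ∀ ω, |g₁ ω| ≤ 1) (hbg₂ : ∀ ω, |g₂ ω| ≤ 1) :
    |(∫ ω, f₁ ω * g₁ ω ∂μ) + (∫ ω, f₁ ω * g₂ ω ∂μ) +
      (∫ ω, f₂ ω * g₁ ω ∂μ) - ∫ ω, f₂ ω * g₂ ω ∂μ| ≤ 2 := by
  have h₁₁ := integrable_mul_of_abs_le_one μ hf₁ hg₁ hbf₁ hbg₁
  have h₁₂ := integrable_mul_of_abs_le_one μ hf₁ hg₂ hbf₁ hbg₂
  have h₂₁ := integrable_mul_of_abs_le_one μ hf₂ hg₁ hbf₂ hbg₁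
  have h₂₂ := integrable_mul_of_abs_le_one μ hf₂ hg₂ hbf₂ hbg₂
  have hcombination : |∫ ω, (f₁ ω * g₁ ω + f₁ ω * g₂ ω + f₂ ω * g₁ ω - f₂ ω * g₂ ω) ∂μ| ≤ 2 :=
    abs_integral_le_of_forall_abs_le μ fun ω =>
      abs_chsh_le_two (hbf₁ ω) (hbf₂ ω) (hbg₁ ω) (hbg₂ ω)
  rwa [integral_sub ((h₁₁.fun_add h₁₂).fun_add h₂₁) h₂₂, integral_add (h₁₁.fun_add h₁₂) h₂₁,
    integral_add h₁₁ h₁₂] at hcombination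
end

section
/- Let (Ω, μ) be a probability space and let E_1, E_2, F_1, F_2 ⊆ Ω be measurable sets. Then −1 ≤ μ(E_1 ∩ F_1) + μ(E_1 ∩ F_2) + μ(E_2 ∩ F_1) − μ(E_2 ∩ F_2) − μ(E_1) − μ(F_1) ≤ 0. -/
/-!
The combination of probabilities is the expectation of the Clauser–Horne polynomial
`chPoly a b c d = a b + a d + c b - c d - a - b` at the indicators of `E₁, F₁, E₂, F₂`.
On the unit cube this polynomial takes values in `[-1, 0]`, and a probability measure
averages values in the closed convex set `[-1, 0]` to a value in `[-1, 0]`.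
-/

open MeasureTheory Set

def chPoly (a b c d : ℝ) : ℝ :=
  a * b + a * d + c * b - c * d - a - b

-- `chPoly` is affine in `c`; at `c = 0` and at `c = 1` both bounds are sums of products of
-- coordinates and their complements.
lemma chPoly_mem_Icc {a b c d : ℝ} (ha : a ∈ Icc (0 : ℝ) 1) (hb : b ∈ Icc (0 : ℝ) 1)
    (hc : c ∈ Icc (0 : ℝ) 1) (hd : d ∈ Icc (0 : ℝ) 1) : chPoly a b c d ∈ Icc (-1 : ℝ) 0 := by
  obtain ⟨ha₀, ha₁⟩ := ha
  obtain ⟨hb₀, hb₁⟩ := hb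
  obtain ⟨hc₀, hc₁⟩ := hc
  obtain ⟨hd₀, hd₁⟩ := hd
  replace ha₁ : 0 ≤ 1 - a := sub_nonneg.2 ha₁
  replace hb₁ : 0 ≤ 1 - b := sub_nonneg.2 hb₁
  replace hc₁ : 0 ≤ 1 - c := sub_nonneg.2 hc₁
  replace hd₁ : 0 ≤ 1 - d := sub_nonneg.2 hd₁
  have lower : chPoly a b c d + 1
      = (1 - c) * ((1 - a) * (1 - b) + a * d) + c * ((1 - a) * (1 - d) + a * b) := by
    unfold chPoly; ring
  have upper : -chPoly a b c d
      = (1 - c) * (b * (1 - a) + a * (1 - d)) + c * (a * (1 - b) + d * (1 - a)) := by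
    unfold chPoly; ring
  constructor
  · have : 0 ≤ chPoly a b c d + 1 := by rw [lower]; positivity
    linarith
  · have : 0 ≤ -chPoly a b c d := by rw [upper]; positivity
    linarith

lemma indicator_one_mem_Icc {Ω : Type*} (s : Set Ω) (x : Ω) :
    s.indicator (1 : Ω → ℝ) x ∈ Icc (0 : ℝ) 1 := by
  by_cases hx : x ∈ s <;> simp [hx]

lemma chPoly_indicator_eq {Ω : Type*} (E₁ E₂ F₁ F₂ : Set Ω) :
    (fun x ↦ chPoly (E₁.indicator 1 x) (F₁.indicator 1 x) (E₂.indicator 1 x) (F₂.indicator 1 x))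
      = (E₁ ∩ F₁).indicator (1 : Ω → ℝ) + (E₁ ∩ F₂).indicator 1 + (E₂ ∩ F₁).indicator 1
        - (E₂ ∩ F₂).indicator 1 - E₁.indicator 1 - F₁.indicator 1 := by
  funext x
  simp only [inter_indicator_one, chPoly, Pi.add_apply, Pi.sub_apply, Pi.mul_apply]

lemma integral_chPoly_indicator {Ω : Type*} [MeasurableSpace Ω] (μ : Measure Ω)
    [IsFiniteMeasure μ] {E₁ E₂ F₁ F₂ : Set Ω} (hE₁ : MeasurableSet E₁) (hE₂ : MeasurableSet E₂)
    (hF₁ : MeasurableSet F₁) (hF₂ : MeasurableSet F₂) :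
    Integrable (fun x ↦ chPoly (E₁.indicator 1 x) (F₁.indicator 1 x) (E₂.indicator 1 x)
        (F₂.indicator 1 x)) μ ∧
      ∫ x, chPoly (E₁.indicator 1 x) (F₁.indicator 1 x) (E₂.indicator 1 x) (F₂.indicator 1 x) ∂μ
        = μ.real (E₁ ∩ F₁) + μ.real (E₁ ∩ F₂) + μ.real (E₂ ∩ F₁) - μ.real (E₂ ∩ F₂)
          - μ.real E₁ - μ.real F₁ := by
  have hint {s : Set Ω} (hs : MeasurableSet s) : Integrable (s.indicator (1 : Ω → ℝ)) μ :=
    (integrable_const 1).indicator hs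
  rw [chPoly_indicator_eq]
  have i₁ := (hint (hE₁.inter hF₁)).add (hint (hE₁.inter hF₂))
  have i₂ := i₁.add (hint (hE₂.inter hF₁))
  have i₃ := i₂.sub (hint (hE₂.inter hF₂))
  have i₄ := i₃.sub (hint hE₁)
  refine ⟨i₄.sub (hint hF₁), ?_⟩
  rw [integral_sub' i₄ (hint hF₁), integral_sub' i₃ (hint hE₁),
    integral_sub' i₂ (hint (hE₂.inter hF₂)), integral_add' i₁ (hint (hE₂.inter hF₁)),
    integral_add' (hint (hE₁.inter hF₁)) (hint (hE₁.inter hF₂))]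
  simp only [integral_indicator_one, hE₁, hF₁, hE₁.inter hF₁, hE₁.inter hF₂, hE₂.inter hF₁,
    hE₂.inter hF₂]

/-- The Clauser-Horne (CH) inequality (51) on joint probabilities: for measurable sets
`E₁, E₂, F₁, F₂` in a probability space `(Ω, μ)`,
`−1 ≤ μ(E₁∩F₁) + μ(E₁∩F₂) + μ(E₂∩F₁) − μ(E₂∩F₂) − μ(E₁) − μ(F₁) ≤ 0`. -/
theorem stmt_9 {Ω : Type*} [MeasurableSpace Ω] (μ : Measure Ω) [IsProbabilityMeasure μ]
    (E₁ E₂ F₁ F₂ : Set Ω)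
    (hE₁ : MeasurableSet E₁) (hE₂ : MeasurableSet E₂)
    (hF₁ : MeasurableSet F₁) (hF₂ : MeasurableSet F₂) :
    (-1 ≤ (μ (E₁ ∩ F₁)).toReal + (μ (E₁ ∩ F₂)).toReal + (μ (E₂ ∩ F₁)).toReal
        - (μ (E₂ ∩ F₂)).toReal - (μ E₁).toReal - (μ F₁).toReal) ∧
    ((μ (E₁ ∩ F₁)).toReal + (μ (E₁ ∩ F₂)).toReal + (μ (E₂ ∩ F₁)).toReal
        - (μ (E₂ ∩ F₂)).toReal - (μ E₁).toReal - (μ F₁).toReal ≤ 0) := by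
  obtain ⟨hint, hval⟩ := integral_chPoly_indicator μ hE₁ hE₂ hF₁ hF₂
  have hbound := (convex_Icc (-1 : ℝ) 0).integral_mem isClosed_Icc
    (ae_of_all μ fun x ↦ chPoly_mem_Icc (indicator_one_mem_Icc E₁ x)
      (indicator_one_mem_Icc F₁ x) (indicator_one_mem_Icc E₂ x) (indicator_one_mem_Icc F₂ x))
    hint
  rwa [hval] at hbound
end

section
/- For N ≥ 2 define real coefficients γ_{(s_1,…,s_N)}, s_n ∈ {1,2}, by the recursion γ_{(1,1)} = γ_{(1,2)} = γ_{(2,1)} = 1, γ_{(2,2)} = −1, and γ_{(s_1,…,s_{n-1},s_n)} = γ_{(s_1,…,s_{n-1})} + (δ_{s_n,1} − δ_{s_n,2}) γ_{(s̄_1,…,s̄_{n-1})} for 3 ≤ n ≤ N, where s̄ denotes the flip 1 ↔ 2. Then the maximum over vectors η_1,…,η_N ∈ {-1,1}^2 of | ∑_{s_1,…,s_N ∈ {1,2}} γ_{(s_1,…,s_N)} η_1^{(s_1)} ⋯ η_N^{(s_N)} | equals 2^{N−1}. -/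
/-!
Splitting off the last party, the Mermin-Klyshko form of `N + 1` parties at a vertex `η` is
`(η_{N+1}¹ + η_{N+1}²) · M_N(η) + (η_{N+1}¹ − η_{N+1}²) · M_N(η̄)`, where `η̄` is `η` with the two
settings of each party exchanged.
For entries `±1` one bracket is `±2` and the other `0`, so `|M_{N+1}| ≤ 2 · max(|M_N(η)|, |M_N(η̄)|)`
and induction from the CHSH bound `2` gives `2^{N−1}`; the all-ones vertex attains it.
-/

/-- The flip `1 ↔ 2` of a setting label (settings are `0`-indexed: `0` stands for the
first setting and `1` for the second). -/
def flipSetting (s : Fin 2) : Fin 2 := if s = 0 then 1 else 0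

/-- The Mermin-Klyshko coefficients `γ_{(s₁,…,s_N)}` for `N = m + 2` parties, settings
`0`-indexed: base case is the CHSH matrix `γ_{(1,1)} = γ_{(1,2)} = γ_{(2,1)} = 1`,
`γ_{(2,2)} = −1`; recursion
`γ_{(s₁,…,s_{n-1},s_n)} = γ_{(s₁,…,s_{n-1})} + (δ_{s_n,1} − δ_{s_n,2}) γ_{(s̄₁,…,s̄_{n-1})}`. -/
noncomputable def MKcoeff : (m : ℕ) → (Fin (m + 2) → Fin 2) → ℝ
  | 0, s => if s 0 = 1 ∧ s 1 = 1 then -1 else 1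
  | m + 1, s =>
      MKcoeff m (fun i => s i.castSucc) +
        (if s (Fin.last (m + 2)) = 0 then 1 else -1) *
          MKcoeff m (fun i => flipSetting (s i.castSucc))

open Finset

theorem flipSetting_involutive : Function.Involutive flipSetting := by
  intro s; fin_cases s <;> rfl

theorem sum_comp_flipSetting {ι β : Type*} [Fintype ι] [DecidableEq ι] [AddCommMonoid β]
    (g : (ι → Fin 2) → β) : ∑ s : ι → Fin 2, g (fun i => flipSetting (s i)) = ∑ s, g s :=
  Equiv.sum_comp (Equiv.piCongrRight fun _ => flipSetting_involutive.toPerm) g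

noncomputable def MKform (m : ℕ) (η : Fin (m + 2) → Fin 2 → ℝ) : ℝ :=
  ∑ s : Fin (m + 2) → Fin 2, MKcoeff m s * ∏ i, η i (s i)

theorem MKform_zero (η : Fin 2 → Fin 2 → ℝ) :
    MKform 0 η = (η 1 0 + η 1 1) * η 0 0 + (η 1 0 - η 1 1) * η 0 1 := by
  rw [MKform, ← (piFinTwoEquiv fun _ => Fin 2).symm.sum_comp, Fintype.sum_prod_type]
  simp only [MKcoeff, Fin.isValue, piFinTwoEquiv_symm_apply, Matrix.finZeroElim_eq_zero,
    Matrix.zero_empty, Matrix.Fin.cons_vecEmpty, Fin.cons_zero, Fin.cons_one,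
    Matrix.cons_val_fin_one, Nat.reduceAdd, Matrix.Fin.cons_vecCons, Nat.succ_eq_add_one,
    Fin.prod_univ_two, Matrix.cons_val_zero, Matrix.cons_val_one, ite_mul, neg_mul, one_mul,
    Fin.sum_univ_two, zero_ne_one, and_false, ↓reduceIte, and_true]
  ring

theorem MKform_succ (m : ℕ) (η : Fin (m + 3) → Fin 2 → ℝ) :
    MKform (m + 1) η =
      (η (Fin.last _) 0 + η (Fin.last _) 1) * MKform m (fun i => η i.castSucc) +
      (η (Fin.last _) 0 - η (Fin.last _) 1) *
        MKform m (fun i t => η i.castSucc (flipSetting t)) := by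
  have hflip : ∑ s : Fin (m + 2) → Fin 2,
      MKcoeff m (fun i => flipSetting (s i)) * ∏ i, η i.castSucc (s i) =
      MKform m (fun i t => η i.castSucc (flipSetting t)) := by
    rw [MKform, ← sum_comp_flipSetting]
    simp only [flipSetting_involutive _]
  rw [MKform, ← (Fin.snocEquiv fun _ => Fin 2).sum_comp, Fintype.sum_prod_type, Fin.sum_univ_two,
    MKform, ← hflip, mul_sum, mul_sum, ← sum_add_distrib, ← sum_add_distrib]
  refine sum_congr rfl fun s _ => ?_
  simp only [Fin.snocEquiv, Equiv.coe_fn_mk, MKcoeff, Fin.prod_univ_castSucc (n := m + 2),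
    Fin.snoc_castSucc, Fin.snoc_last, Fin.isValue, ↓reduceIte, one_ne_zero]
  ring

theorem abs_add_mul_add_sub_mul_le {a b x y M : ℝ} (ha : a = -1 ∨ a = 1) (hb : b = -1 ∨ b = 1)
    (hx : |x| ≤ M) (hy : |y| ≤ M) : |(a + b) * x + (a - b) * y| ≤ 2 * M := by
  rcases ha with rfl | rfl <;> rcases hb with rfl | rfl <;> norm_num [abs_mul] <;> linarith

theorem abs_MKform_le (m : ℕ) (η : Fin (m + 2) → Fin 2 → ℝ)
    (hη : ∀ i t, η i t = -1 ∨ η i t = 1) : |MKform m η| ≤ 2 ^ (m + 1) := by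
  induction m with
  | zero =>
    rw [MKform_zero]
    refine (abs_add_mul_add_sub_mul_le (M := 1) (hη 1 0) (hη 1 1) ?_ ?_).trans_eq (by norm_num)
    · rcases hη 0 0 with h | h <;> simp [h]
    · rcases hη 0 1 with h | h <;> simp [h]
  | succ m ih =>
    rw [MKform_succ, pow_succ']
    exact abs_add_mul_add_sub_mul_le (hη _ 0) (hη _ 1)
      (ih _ fun i t => hη i.castSucc t) (ih _ fun i t => hη i.castSucc (flipSetting t))

theorem MKform_one (m : ℕ) : MKform m (fun _ _ => 1) = 2 ^ (m + 1) := by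
  induction m with
  | zero => norm_num [MKform_zero]
  | succ m ih => rw [MKform_succ, ih, pow_succ' 2 (m + 1)]; norm_num

/-- Relation (57): the maximum over vertices `η₁, …, η_N ∈ {-1,1}²` of the absolute value
of the Mermin-Klyshko `N`-linear form equals `2^{N−1}` (here `N = m + 2 ≥ 2`). -/
theorem stmt_10 (m : ℕ) :
    IsGreatest {x : ℝ | ∃ η : Fin (m + 2) → Fin 2 → ℝ,
        (∀ i t, η i t = -1 ∨ η i t = 1) ∧
        x = |∑ s : Fin (m + 2) → Fin 2, MKcoeff m s * ∏ i, η i (s i)|}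
      (2 ^ (m + 1)) := by
  refine ⟨⟨fun _ _ => 1, fun _ _ => Or.inr rfl, ?_⟩, ?_⟩
  · have h := MKform_one m
    rw [MKform] at h
    rw [h, abs_of_pos (by positivity)]
  · rintro x ⟨η, hη, rfl⟩
    exact abs_MKform_le m η hη
end

section
/- Let (Ω, μ) be a probability space, N ≥ 1, and for each site n ∈ {1,…,N}, each setting s_n ∈ {1,…,S_n}, and each index q_n ∈ {1,…,Q_n}, let E_n^{(s_n,q_n)} ⊆ Ω be a measurable set such that for each fixed n and s_n the sets E_n^{(s_n,1)},…,E_n^{(s_n,Q_n)} are pairwise disjoint. For each n let Ξ_n = {η ∈ {0,1}^{S_n Q_n} : ∑_{q=1}^{Q_n} η^{(s,q)} ≤ 1 for every s = 1,…,S_n}. Then for any real coefficients γ_{(s_{n_1},…,s_{n_M})}^{(q_{n_1},…,q_{n_M})} indexed by nonempty subsets {n_1 < ⋯ < n_M} ⊆ {1,…,N}, settings, and q-indices: min over (η_1,…,η_N) ∈ Ξ_1 × ⋯ × Ξ_N of ∑_{M,\,n_1<⋯<n_M} ∑ γ_{(s_{n_1},…,s_{n_M})}^{(q_{n_1},…,q_{n_M})}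 η_{n_1}^{(s_{n_1},q_{n_1})} ⋯ η_{n_M}^{(s_{n_M},q_{n_M})} ≤ ∑_{M,\,n_1<⋯<n_M} ∑ γ_{(s_{n_1},…,s_{n_M})}^{(q_{n_1},…,q_{n_M})} μ(E_{n_1}^{(s_{n_1},q_{n_1})} ∩ ⋯ ∩ E_{n_M}^{(s_{n_M},q_{n_M})}) ≤ max over (η_1,…,η_N) ∈ Ξ_1 × ⋯ × Ξ_N of the same multilinear expression. -/
/-!
The hidden variable ω determines a deterministic local strategy: the vector of indicators
`1_{E n s q}(ω)`, which is admissible because the events `E n s q` are disjoint in `q`.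
Evaluated at this vector, the multilinear form `G` becomes `∑ γ · 1_{⋂ E}`, whose integral is
the correlation sum. So the correlation sum is the average of `G` over admissible vectors and
lies between the minimum and the maximum of `G` on the finite set of admissible vectors.
-/

open MeasureTheory Function

section Indicator

variable {Ω ι : Type*}

theorem indicator_one_eq_zero_or_one (A : Set Ω) (ω : Ω) :
    A.indicator (1 : Ω → ℝ) ω = 0 ∨ A.indicator (1 : Ω → ℝ) ω = 1 := by
  by_cases h : ω ∈ A <;> simp [h]

theorem sum_indicator_one_le_one [Fintype ι] {A : ι → Set Ω} (hA : Pairwise (Disjoint on A))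
    (ω : Ω) : ∑ i, (A i).indicator (1 : Ω → ℝ) ω ≤ 1 := by
  rw [← Finset.indicator_biUnion_apply _ _ (hA.set_pairwise _)]
  exact Set.indicator_le_self' (fun _ _ => zero_le_one) ω

end Indicator

theorem finite_setOf_forall_eq_zero_or_one {ι : Type*} {κ : ι → Type*}
    {ν : (i : ι) → κ i → Type*} [Finite ι] [∀ i, Finite (κ i)] [∀ i j, Finite (ν i j)] :
    {η : (i : ι) → (j : κ i) → ν i j → ℝ | ∀ i j k, η i j k = 0 ∨ η i j k = 1}.Finite :=
  Set.Finite.pi' fun _ => Set.Finite.pi' fun _ => Set.Finite.pi' fun _ =>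
    Set.toFinite ({0, 1} : Set ℝ)

section Integral

variable {Ω : Type*} [MeasurableSpace Ω] {μ : Measure Ω}

theorem integrable_sum_sum_sum {ι : Type*} {κ ν : ι → Type*} [∀ i, Fintype (κ i)]
    [∀ i, Fintype (ν i)] (t : Finset ι) {F : (i : ι) → κ i → ν i → Ω → ℝ}
    (hF : ∀ i j k, Integrable (F i j k) μ) :
    Integrable (fun ω => ∑ i ∈ t, ∑ j, ∑ k, F i j k ω) μ :=
  integrable_finsetSum _ fun i _ => integrable_finsetSum _ fun j _ =>
    integrable_finsetSum _ fun k _ => hF i j k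

theorem integral_sum_sum_sum {ι : Type*} {κ ν : ι → Type*} [∀ i, Fintype (κ i)]
    [∀ i, Fintype (ν i)] (t : Finset ι) {F : (i : ι) → κ i → ν i → Ω → ℝ}
    (hF : ∀ i j k, Integrable (F i j k) μ) :
    ∫ ω, ∑ i ∈ t, ∑ j, ∑ k, F i j k ω ∂μ = ∑ i ∈ t, ∑ j, ∑ k, ∫ ω, F i j k ω ∂μ := by
  rw [integral_finsetSum _ fun i _ => integrable_finsetSum _ fun j _ =>
    integrable_finsetSum _ fun k _ => hF i j k]
  refine Finset.sum_congr rfl fun i _ => ?_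
  rw [integral_finsetSum _ fun j _ => integrable_finsetSum _ fun k _ => hF i j k]
  exact Finset.sum_congr rfl fun j _ => integral_finsetSum _ fun k _ => hF i j k

variable [IsProbabilityMeasure μ] {g : Ω → ℝ} {A : Set ℝ}

theorem csInf_le_integral (hg : Integrable g μ) (hA : BddBelow A) (hgA : ∀ᵐ ω ∂μ, g ω ∈ A) :
    sInf A ≤ ∫ ω, g ω ∂μ :=
  calc sInf A = ∫ _, sInf A ∂μ := by simp
    _ ≤ ∫ ω, g ω ∂μ :=
      integral_mono_ae (integrable_const _) hg (hgA.mono fun _ h => csInf_le hA h)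

theorem integral_le_csSup (hg : Integrable g μ) (hA : BddAbove A) (hgA : ∀ᵐ ω ∂μ, g ω ∈ A) :
    ∫ ω, g ω ∂μ ≤ sSup A :=
  calc ∫ ω, g ω ∂μ ≤ ∫ _, sSup A ∂μ :=
        integral_mono_ae hg (integrable_const _) (hgA.mono fun _ h => le_csSup hA h)
    _ = sSup A := by simp

end Integral

theorem stmt_12_general {Ω : Type*} [MeasurableSpace Ω] (μ : Measure Ω) [IsProbabilityMeasure μ]
    (N : ℕ) (S Q : Fin N → ℕ)
    (E : (n : Fin N) → Fin (S n) → Fin (Q n) → Set Ω)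
    (hE : ∀ n s q, MeasurableSet (E n s q))
    (hdisj : ∀ n s, ∀ q q' : Fin (Q n), q ≠ q' → E n s q ∩ E n s q' = ∅)
    (γ : (T : Finset (Fin N)) →
      ((n : T) → Fin (S n.1)) → ((n : T) → Fin (Q n.1)) → ℝ) :
    let Ξ : (n : Fin N) → Set (Fin (S n) → Fin (Q n) → ℝ) := fun n =>
      {η | (∀ s q, η s q = 0 ∨ η s q = 1) ∧ ∀ s, (∑ q, η s q) ≤ 1}
    let G : ((n : Fin N) → Fin (S n) → Fin (Q n) → ℝ) → ℝ := fun η =>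
      ∑ T ∈ Finset.univ.powerset.filter (fun T : Finset (Fin N) => T.Nonempty),
        ∑ s : (n : T) → Fin (S n.1), ∑ q : (n : T) → Fin (Q n.1),
          γ T s q * ∏ n : T, η n.1 (s n) (q n)
    (sInf (G '' {η | ∀ n, η n ∈ Ξ n}) ≤
      ∑ T ∈ Finset.univ.powerset.filter (fun T : Finset (Fin N) => T.Nonempty),
        ∑ s : (n : T) → Fin (S n.1), ∑ q : (n : T) → Fin (Q n.1),
          γ T s q * (μ (⋂ n : T, E n.1 (s n) (q n))).toReal) ∧
    ((∑ T ∈ Finset.univ.powerset.filter (fun T : Finset (Fin N) => T.Nonempty),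
        ∑ s : (n : T) → Fin (S n.1), ∑ q : (n : T) → Fin (Q n.1),
          γ T s q * (μ (⋂ n : T, E n.1 (s n) (q n))).toReal) ≤
      sSup (G '' {η | ∀ n, η n ∈ Ξ n})) := by
  intro Ξ G
  set f : Ω → (n : Fin N) → Fin (S n) → Fin (Q n) → ℝ := fun ω n s q => (E n s q).indicator 1 ω
  have hf_mem (ω : Ω) : f ω ∈ {η | ∀ n, η n ∈ Ξ n} := fun n =>
    ⟨fun s q => indicator_one_eq_zero_or_one _ ω, fun s => sum_indicator_one_le_one
      (fun q q' h => Set.disjoint_iff_inter_eq_empty.mpr (hdisj n s q q' h)) ω⟩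
  have hfinite : (G '' {η | ∀ n, η n ∈ Ξ n}).Finite :=
    (finite_setOf_forall_eq_zero_or_one.subset fun η hη n => (hη n).1).image G
  have hGf : (fun ω => G (f ω)) = fun ω =>
      ∑ T ∈ Finset.univ.powerset.filter (fun T : Finset (Fin N) => T.Nonempty),
        ∑ s : (n : T) → Fin (S n.1), ∑ q : (n : T) → Fin (Q n.1),
          γ T s q * (⋂ n : T, E n.1 (s n) (q n)).indicator 1 ω := by
    simp only [G, f, prod_indicator_const_apply, Finset.mem_univ, Set.iInter_true, one_pow]
  have hmeas (T : Finset (Fin N)) (s : (n : T) → Fin (S n.1)) (q : (n : T) → Fin (Q n.1)) :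
      MeasurableSet (⋂ n : T, E n.1 (s n) (q n)) :=
    .iInter fun n => hE _ _ _
  have hint (T : Finset (Fin N)) (s : (n : T) → Fin (S n.1)) (q : (n : T) → Fin (Q n.1)) :
      Integrable (fun ω => γ T s q * (⋂ n : T, E n.1 (s n) (q n)).indicator 1 ω) μ :=
    ((integrable_const 1).indicator (hmeas T s q)).const_mul _
  have hGf_int : Integrable (fun ω => G (f ω)) μ := hGf ▸ integrable_sum_sum_sum _ hint
  have hGf_integral : ∫ ω, G (f ω) ∂μ =
      ∑ T ∈ Finset.univ.powerset.filter (fun T : Finset (Fin N) => T.Nonempty),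
        ∑ s : (n : T) → Fin (S n.1), ∑ q : (n : T) → Fin (Q n.1),
          γ T s q * (μ (⋂ n : T, E n.1 (s n) (q n))).toReal := by
    simp only [hGf, integral_sum_sum_sum _ hint, integral_const_mul,
      integral_indicator_one (hmeas _ _ _), measureReal_def]
  have hGf_mem : ∀ᵐ ω ∂μ, G (f ω) ∈ G '' {η | ∀ n, η n ∈ Ξ n} :=
    ae_of_all _ fun ω => ⟨f ω, hf_mem ω, rfl⟩
  rw [← hGf_integral]
  exact ⟨csInf_le_integral hGf_int hfinite.bddBelow hGf_mem,
    integral_le_csSup hGf_int hfinite.bddAbove hGf_mem⟩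

/-- Corollary 3 (inequality (34)): the tight linear LHV constraint on joint probabilities
of product events. The hidden-variable events `E n s q ⊆ Ω` are pairwise disjoint in `q`
for each fixed site `n` and setting `s`, and the extrema run over the sets
`Ξ n` of admissible `{0,1}`-valued vectors with at most one `1` per setting. -/
theorem stmt_12 {Ω : Type*} [MeasurableSpace Ω] (μ : Measure Ω) [IsProbabilityMeasure μ]
    (N : ℕ) (hN : 1 ≤ N) (S Q : Fin N → ℕ)
    (E : (n : Fin N) → Fin (S n) → Fin (Q n) → Set Ω)
    (hE : ∀ n s q, MeasurableSet (E n s q))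
    (hdisj : ∀ n s, ∀ q q' : Fin (Q n), q ≠ q' → E n s q ∩ E n s q' = ∅)
    (γ : (T : Finset (Fin N)) →
      ((n : T) → Fin (S n.1)) → ((n : T) → Fin (Q n.1)) → ℝ) :
    let Ξ : (n : Fin N) → Set (Fin (S n) → Fin (Q n) → ℝ) := fun n =>
      {η | (∀ s q, η s q = 0 ∨ η s q = 1) ∧ ∀ s, (∑ q, η s q) ≤ 1}
    let G : ((n : Fin N) → Fin (S n) → Fin (Q n) → ℝ) → ℝ := fun η =>
      ∑ T ∈ Finset.univ.powerset.filter (fun T : Finset (Fin N) => T.Nonempty),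
        ∑ s : (n : T) → Fin (S n.1), ∑ q : (n : T) → Fin (Q n.1),
          γ T s q * ∏ n : T, η n.1 (s n) (q n)
    (sInf (G '' {η | ∀ n, η n ∈ Ξ n}) ≤
      ∑ T ∈ Finset.univ.powerset.filter (fun T : Finset (Fin N) => T.Nonempty),
        ∑ s : (n : T) → Fin (S n.1), ∑ q : (n : T) → Fin (Q n.1),
          γ T s q * (μ (⋂ n : T, E n.1 (s n) (q n))).toReal) ∧
    ((∑ T ∈ Finset.univ.powerset.filter (fun T : Finset (Fin N) => T.Nonempty),
        ∑ s : (n : T) → Fin (S n.1), ∑ q : (n : T) → Fin (Q n.1),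
          γ T s q * (μ (⋂ n : T, E n.1 (s n) (q n))).toReal) ≤
      sSup (G '' {η | ∀ n, η n ∈ Ξ n})) :=
  stmt_12_general μ N S Q E hE hdisj γ
end

section
/- Let (Ω, μ) be a probability space, N ≥ 1, and for each site n ∈ {1,…,N} and setting s ∈ {1,…,S_n} let Λ_n^{(s)} be a measurable space and X_n^{(s)} : Ω → Λ_n^{(s)} a measurable map. For every setting tuple s = (s_1,…,s_N) and every q ∈ {1,…,Q_s}, let D_s^{(q)} ⊆ Λ_1^{(s_1)} × ⋯ × Λ_N^{(s_N)} be a measurable set. Then for any real coefficients γ_s^{(q)}: inf over all families λ = (λ_n^{(t)})_{n,t} with λ_n^{(t)} ∈ Λ_n^{(t)} of ∑_{s,q} γ_s^{(q)} χ_{D_s^{(q)}}(λ_1^{(s_1)},…,λ_N^{(s_N)}) ≤ ∑_{s,q} γ_s^{(q)} μ({ω : (X_1^{(s_1)}(ω),…,X_N^{(s_N)}(ω)) ∈ D_s^{(q)}}) ≤ sup over all such families λ of ∑_{s,q} γ_s^{(q)} χ_{D_s^{(q)}}(λ_1^{(s_1)},…,λ_N^{(s_N)}). -/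
open MeasureTheory

/-! An LHV model is a random choice `ω ↦ (X n t ω)_{n,t}` of a complete family of outcomes, and the
Bell functional `∑ γ χ_D` evaluated at this family averages to the middle sum, because the
probability of each event is the expectation of its indicator. An average of a bounded function
lies between its infimum and supremum; boundedness holds because the functional depends only on
which of the finitely many events occur, so it takes finitely many values. -/

theorem Set.Finite.range_sum {ι α M : Type*} [Fintype ι] [AddCommMonoid M] {f : ι → α → M}
    (hf : ∀ i, (Set.range (f i)).Finite) : (Set.range fun a => ∑ i, f i a).Finite := by
  refine ((Set.Finite.pi hf).image fun v => ∑ i, v i).subset ?_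
  rintro _ ⟨a, rfl⟩
  exact ⟨fun i => f i a, by simp, rfl⟩

theorem Set.finite_range_mul_indicator_comp {α β : Type*} (γ : ℝ) (D : Set β) (φ : α → β) :
    (Set.range fun a => γ * D.indicator (fun _ => (1 : ℝ)) (φ a)).Finite := by
  refine (Set.toFinite {0, γ}).subset ?_
  rintro _ ⟨a, rfl⟩
  by_cases h : φ a ∈ D <;> simp [h]

section Average

variable {Ω α : Type*} [MeasurableSpace Ω] {μ : Measure Ω} [IsProbabilityMeasure μ]

theorem ciInf_le_integral_comp {g : α → ℝ} (hg : BddBelow (Set.range g)) {Y : Ω → α}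
    (hint : Integrable (fun ω => g (Y ω)) μ) : ⨅ a, g a ≤ ∫ ω, g (Y ω) ∂μ := by
  simpa using integral_mono (integrable_const (⨅ a, g a)) hint fun ω => ciInf_le hg (Y ω)

theorem integral_comp_le_ciSup {g : α → ℝ} (hg : BddAbove (Set.range g)) {Y : Ω → α}
    (hint : Integrable (fun ω => g (Y ω)) μ) : ∫ ω, g (Y ω) ∂μ ≤ ⨆ a, g a := by
  simpa using integral_mono hint (integrable_const (⨆ a, g a)) fun ω => le_ciSup hg (Y ω)

end Average

theorem indicator_comp_eq_indicator_preimage {Ω β : Type*} {Y : Ω → β} {D : Set β} :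
    (fun ω => D.indicator (fun _ => (1 : ℝ)) (Y ω)) = (Y ⁻¹' D).indicator 1 :=
  funext fun _ => (Set.indicator_comp_right Y).symm

section Indicator

variable {Ω β : Type*} [MeasurableSpace Ω] [MeasurableSpace β] {μ : Measure Ω}
  {Y : Ω → β} {D : Set β}

theorem integrable_indicator_comp [IsFiniteMeasure μ] (hY : Measurable Y) (hD : MeasurableSet D) :
    Integrable (fun ω => D.indicator (fun _ => (1 : ℝ)) (Y ω)) μ := by
  rw [indicator_comp_eq_indicator_preimage]
  exact (integrable_const 1).indicator (hY hD)

theorem integral_indicator_comp (hY : Measurable Y) (hD : MeasurableSet D) :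
    ∫ ω, D.indicator (fun _ => (1 : ℝ)) (Y ω) ∂μ = (μ {ω | Y ω ∈ D}).toReal := by
  rw [indicator_comp_eq_indicator_preimage, integral_indicator_one (hY hD)]
  rfl

end Indicator

section BellFunctional

variable {Ω ι : Type*} [MeasurableSpace Ω] {μ : Measure Ω} [IsFiniteMeasure μ]
  [Fintype ι] {κ : ι → Type*} [∀ i, Fintype (κ i)]
  {β : ι → Type*} [∀ i, MeasurableSpace (β i)] {Y : ∀ i, Ω → β i} {D : ∀ i, κ i → Set (β i)}

theorem integrable_sum_sum_mul_indicator_comp (hY : ∀ i, Measurable (Y i))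
    (hD : ∀ i k, MeasurableSet (D i k)) (γ : ∀ i, κ i → ℝ) :
    Integrable (fun ω => ∑ i, ∑ k, γ i k * (D i k).indicator (fun _ => (1 : ℝ)) (Y i ω)) μ :=
  integrable_finsetSum _ fun i _ => integrable_finsetSum _ fun k _ =>
    (integrable_indicator_comp (hY i) (hD i k)).const_mul _

theorem integral_sum_sum_mul_indicator_comp (hY : ∀ i, Measurable (Y i))
    (hD : ∀ i k, MeasurableSet (D i k)) (γ : ∀ i, κ i → ℝ) :
    ∫ ω, ∑ i, ∑ k, γ i k * (D i k).indicator (fun _ => (1 : ℝ)) (Y i ω) ∂μ =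
      ∑ i, ∑ k, γ i k * (μ {ω | Y i ω ∈ D i k}).toReal := by
  have hterm : ∀ i k, Integrable (fun ω => γ i k * (D i k).indicator (fun _ => 1) (Y i ω)) μ :=
    fun i k => (integrable_indicator_comp (hY i) (hD i k)).const_mul _
  rw [integral_finsetSum _ fun i _ => integrable_finsetSum _ fun k _ => hterm i k]
  refine Finset.sum_congr rfl fun i _ => ?_
  rw [integral_finsetSum _ fun k _ => hterm i k]
  refine Finset.sum_congr rfl fun k _ => ?_
  rw [integral_const_mul, integral_indicator_comp (hY i) (hD i k)]

end BellFunctional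

theorem stmt_13_general {Ω : Type*} [MeasurableSpace Ω] (μ : Measure Ω) [IsProbabilityMeasure μ]
    (N : ℕ) (S : Fin N → ℕ)
    (Λ : (n : Fin N) → Fin (S n) → Type*)
    [∀ n s, MeasurableSpace (Λ n s)]
    (X : (n : Fin N) → (s : Fin (S n)) → Ω → Λ n s)
    (hX : ∀ n s, Measurable (X n s))
    (Q : ((n : Fin N) → Fin (S n)) → ℕ)
    (D : (s : (n : Fin N) → Fin (S n)) → Fin (Q s) → Set ((n : Fin N) → Λ n (s n)))
    (hD : ∀ s q, MeasurableSet (D s q))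
    (γ : (s : (n : Fin N) → Fin (S n)) → Fin (Q s) → ℝ) :
    ((⨅ lam : (n : Fin N) → (t : Fin (S n)) → Λ n t,
        ∑ s : (n : Fin N) → Fin (S n), ∑ q : Fin (Q s),
          γ s q * Set.indicator (D s q) (fun _ => (1 : ℝ)) (fun n => lam n (s n))) ≤
      ∑ s : (n : Fin N) → Fin (S n), ∑ q : Fin (Q s),
        γ s q * (μ {ω | (fun n => X n (s n) ω) ∈ D s q}).toReal) ∧
    ((∑ s : (n : Fin N) → Fin (S n), ∑ q : Fin (Q s),
        γ s q * (μ {ω | (fun n => X n (s n) ω) ∈ D s q}).toReal) ≤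
      ⨆ lam : (n : Fin N) → (t : Fin (S n)) → Λ n t,
        ∑ s : (n : Fin N) → Fin (S n), ∑ q : Fin (Q s),
          γ s q * Set.indicator (D s q) (fun _ => (1 : ℝ)) (fun n => lam n (s n))) := by
  have hY : ∀ s : (n : Fin N) → Fin (S n), Measurable fun ω n => X n (s n) ω :=
    fun s => measurable_pi_lambda _ fun n => hX n (s n)
  have hfin := Set.Finite.range_sum fun s => Set.Finite.range_sum fun q =>
    Set.finite_range_mul_indicator_comp (γ s q) (D s q)
      fun lam : (n : Fin N) → (t : Fin (S n)) → Λ n t => fun n => lam n (s n)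
  have hint := integrable_sum_sum_mul_indicator_comp (μ := μ) hY hD γ
  rw [← integral_sum_sum_mul_indicator_comp hY hD γ]
  exact ⟨ciInf_le_integral_comp (Y := fun ω n t => X n t ω) hfin.bddBelow hint,
    integral_comp_le_ciSup (Y := fun ω n t => X n t ω) hfin.bddAbove hint⟩

/-- Corollary 4 (inequality (40)): the tight linear LHV constraint on joint probabilities
of arbitrary events `D s q ⊆ Λ₁^{(s₁)} × ⋯ × Λ_N^{(s_N)}`, not necessarily of the product
form; `Set.indicator (D s q) 1` is the indicator function `χ_{D_s^{(q)}}`. -/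
theorem stmt_13 {Ω : Type*} [MeasurableSpace Ω] (μ : Measure Ω) [IsProbabilityMeasure μ]
    (N : ℕ) (hN : 1 ≤ N) (S : Fin N → ℕ) (hS : ∀ n, 1 ≤ S n)
    (Λ : (n : Fin N) → Fin (S n) → Type*)
    [∀ n s, MeasurableSpace (Λ n s)]
    (X : (n : Fin N) → (s : Fin (S n)) → Ω → Λ n s)
    (hX : ∀ n s, Measurable (X n s))
    (Q : ((n : Fin N) → Fin (S n)) → ℕ)
    (D : (s : (n : Fin N) → Fin (S n)) → Fin (Q s) → Set ((n : Fin N) → Λ n (s n)))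
    (hD : ∀ s q, MeasurableSet (D s q))
    (γ : (s : (n : Fin N) → Fin (S n)) → Fin (Q s) → ℝ) :
    ((⨅ lam : (n : Fin N) → (t : Fin (S n)) → Λ n t,
        ∑ s : (n : Fin N) → Fin (S n), ∑ q : Fin (Q s),
          γ s q * Set.indicator (D s q) (fun _ => (1 : ℝ)) (fun n => lam n (s n))) ≤
      ∑ s : (n : Fin N) → Fin (S n), ∑ q : Fin (Q s),
        γ s q * (μ {ω | (fun n => X n (s n) ω) ∈ D s q}).toReal) ∧
    ((∑ s : (n : Fin N) → Fin (S n), ∑ q : Fin (Q s),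
        γ s q * (μ {ω | (fun n => X n (s n) ω) ∈ D s q}).toReal) ≤
      ⨆ lam : (n : Fin N) → (t : Fin (S n)) → Λ n t,
        ∑ s : (n : Fin N) → Fin (S n), ∑ q : Fin (Q s),
          γ s q * Set.indicator (D s q) (fun _ => (1 : ℝ)) (fun n => lam n (s n))) :=
  stmt_13_general μ N S Λ X hX Q D hD γ
end

section
/- Let (Ω, μ) be a probability space and let E_1, E_2, E_3, E_4 ⊆ Ω and F_1, F_2, F_3, F_4 ⊆ Ω be measurable sets. Let γ be the 4 × 4 matrix with entries γ_{ik} given by rows (1,1,1,1), (1,1,1,−1), (1,1,−1,0), (1,−1,0,0). Then ∑_{i,k=1}^{4} γ_{ik} μ(E_i ∩ F_k) − μ(E_1) − 3 μ(F_1) − 2 μ(F_2) − μ(F_3) ≤ 0. -/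
/-!
Integrating against `μ`, the Bell functional of the events `E i`, `F k` is the expectation of
the same functional evaluated at the `0/1`-vectors `(1_{E i}(ω))ᵢ`, `(1_{F k}(ω))ₖ`, because
`1_{E ∩ F} = 1_E · 1_F`. So it suffices to check the inequality for deterministic outcomes.
For `I₄₄₂₂`, once Alice's outcomes are fixed the functional is affine in Bob's, so each of the
sixteen cases is a linear inequality on the cube `[0, 1]⁴`.
-/

open MeasureTheory

section IndicatorSums

variable {Ω ι : Type*} [MeasurableSpace Ω] [Fintype ι] (μ : Measure Ω) [IsFiniteMeasure μ]
  (c : ι → ℝ) {A : ι → Set Ω}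

theorem integrable_sum_mul_indicator_one (hA : ∀ i, MeasurableSet (A i)) :
    Integrable (fun ω => ∑ i, c i * (A i).indicator 1 ω) μ := by
  have hind : ∀ i, Integrable ((A i).indicator (1 : Ω → ℝ)) μ :=
    fun i => (integrable_const 1).indicator (hA i)
  exact integrable_finsetSum _ fun i _ => (hind i).const_mul _

theorem integral_sum_mul_indicator_one (hA : ∀ i, MeasurableSet (A i)) :
    ∫ ω, ∑ i, c i * (A i).indicator 1 ω ∂μ = ∑ i, c i * (μ (A i)).toReal := by
  have hind : ∀ i, Integrable ((A i).indicator (1 : Ω → ℝ)) μ :=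
    fun i => (integrable_const 1).indicator (hA i)
  rw [integral_finsetSum _ fun i _ => (hind i).const_mul _]
  simp only [integral_const_mul, integral_indicator_one (hA _), measureReal_def]

end IndicatorSums

theorem bell_sum_nonpos_of_deterministic {Ω ι κ : Type*} [MeasurableSpace Ω] [Fintype ι]
    [Fintype κ] (μ : Measure Ω) [IsFiniteMeasure μ] (γ : ι → κ → ℝ) (α : ι → ℝ) (β : κ → ℝ)
    (E : ι → Set Ω) (F : κ → Set Ω)
    (hE : ∀ i, MeasurableSet (E i)) (hF : ∀ k, MeasurableSet (F k))
    (h : ∀ (x : ι → ℝ) (y : κ → ℝ), (∀ i, x i = 0 ∨ x i = 1) → (∀ k, y k = 0 ∨ y k = 1) →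
      ∑ i, ∑ k, γ i k * (x i * y k) - ∑ i, α i * x i - ∑ k, β k * y k ≤ 0) :
    ∑ i, ∑ k, γ i k * (μ (E i ∩ F k)).toReal - ∑ i, α i * (μ (E i)).toReal
      - ∑ k, β k * (μ (F k)).toReal ≤ 0 := by
  have hEF : ∀ p : ι × κ, MeasurableSet (E p.1 ∩ F p.2) := fun p => (hE p.1).inter (hF p.2)
  have hpoint : ∀ ω, ∑ p : ι × κ, γ p.1 p.2 * (E p.1 ∩ F p.2).indicator 1 ω
      - ∑ i, α i * (E i).indicator 1 ω - ∑ k, β k * (F k).indicator 1 ω ≤ 0 := fun ω => by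
    have hω := h (fun i => (E i).indicator 1 ω) (fun k => (F k).indicator 1 ω)
      (fun i => Set.indicator_eq_zero_or_self (E i) 1 ω)
      (fun k => Set.indicator_eq_zero_or_self (F k) 1 ω)
    rw [Fintype.sum_prod_type]
    simpa only [Set.inter_indicator_one, Pi.mul_apply] using hω
  have hintEF := integrable_sum_mul_indicator_one μ (fun p => γ p.1 p.2) hEF
  have hintE := integrable_sum_mul_indicator_one μ α hE
  have hintF := integrable_sum_mul_indicator_one μ β hF
  calc _ = ∫ ω, (∑ p : ι × κ, γ p.1 p.2 * (E p.1 ∩ F p.2).indicator 1 ω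
        - ∑ i, α i * (E i).indicator 1 ω - ∑ k, β k * (F k).indicator 1 ω) ∂μ := by
        rw [integral_sub (hintEF.sub' hintE) hintF, integral_sub hintEF hintE,
          integral_sum_mul_indicator_one μ _ hEF, integral_sum_mul_indicator_one μ α hE,
          integral_sum_mul_indicator_one μ β hF, Fintype.sum_prod_type]
    _ ≤ 0 := integral_nonpos hpoint

theorem i4422_nonpos (x y : Fin 4 → ℝ) (hx : ∀ i, x i = 0 ∨ x i = 1)
    (hy : ∀ k, 0 ≤ y k ∧ y k ≤ 1) :
    ∑ i, ∑ k, !![(1 : ℝ), 1, 1, 1; 1, 1, 1, -1; 1, 1, -1, 0; 1, -1, 0, 0] i k * (x i * y k)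
      - ∑ i, ![1, 0, 0, 0] i * x i - ∑ k, ![3, 2, 1, 0] k * y k ≤ 0 := by
  have hy0 := hy 0
  have hy1 := hy 1
  have hy2 := hy 2
  have hy3 := hy 3
  simp only [Fin.sum_univ_four, Matrix.of_apply, Matrix.cons_val', Matrix.cons_val_fin_one,
    Matrix.cons_val_zero, Matrix.cons_val_one, Matrix.cons_val, one_mul, neg_mul, zero_mul,
    add_zero]
  rcases hx 0 with h0 | h0 <;> rcases hx 1 with h1 | h1 <;> rcases hx 2 with h2 | h2 <;>
    rcases hx 3 with h3 | h3 <;> simp only [h0, h1, h2, h3] <;> linarith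

/-- The Collins-Gisin extreme Bell-type inequality `I₄₄₂₂ ≤ 0` (inequality (67)): for
hidden-variable events `E i` (Alice) and `F k` (Bob) in a probability space `(Ω, μ)`,
`∑_{i,k} γ_{ik} μ(E_i ∩ F_k) − μ(E₁) − 3μ(F₁) − 2μ(F₂) − μ(F₃) ≤ 0`. -/
theorem stmt_15 {Ω : Type*} [MeasurableSpace Ω] (μ : Measure Ω) [IsProbabilityMeasure μ]
    (E F : Fin 4 → Set Ω)
    (hE : ∀ i, MeasurableSet (E i)) (hF : ∀ k, MeasurableSet (F k)) :
    (∑ i, ∑ k,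
        (!![(1 : ℝ), 1, 1, 1; 1, 1, 1, -1; 1, 1, -1, 0; 1, -1, 0, 0] i k) *
          (μ (E i ∩ F k)).toReal)
      - (μ (E 0)).toReal - 3 * (μ (F 0)).toReal - 2 * (μ (F 1)).toReal
      - (μ (F 2)).toReal ≤ 0 := by
  have h := bell_sum_nonpos_of_deterministic μ _ ![1, 0, 0, 0] ![3, 2, 1, 0] E F hE hF
    fun x y hx hy => i4422_nonpos x y hx fun k => by rcases hy k with h | h <;> simp [h]
  have hα : ∑ i, ![(1 : ℝ), 0, 0, 0] i * (μ (E i)).toReal = (μ (E 0)).toReal := by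
    simp [Fin.sum_univ_four]
  have hβ : ∑ k, ![(3 : ℝ), 2, 1, 0] k * (μ (F k)).toReal
      = 3 * (μ (F 0)).toReal + 2 * (μ (F 1)).toReal + (μ (F 2)).toReal := by
    simp [Fin.sum_univ_four]
  linarith
end

section
/- Let (Ω, μ) be a probability space. For i, j ∈ {1,2} let E_i^{(j)} ⊆ Ω be measurable with E_i^{(1)} ∩ E_i^{(2)} = ∅ for each i, and for k, l ∈ {1,2} let F_k^{(l)} ⊆ Ω be measurable with F_k^{(1)} ∩ F_k^{(2)} = ∅ for each k. Let γ_{ik}^{(j,l)} be the entries of the 4 × 4 matrix with rows (1,1,0,1), (1,0,1,1), (0,1,0,−1), (1,1,−1,−1), where the double indices (i,j) and (k,l) are ordered (1,1),(1,2),(2,1),(2,2). Then ∑_{i,j,k,l ∈ {1,2}} γ_{ik}^{(j,l)} μ(E_i^{(j)} ∩ F_k^{(l)}) − μ(E_1^{(1)}) − μ(E_1^{(2)}) − μ(F_1^{(1)}) − μ(F_1^{(2)}) ≤ 0. -/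
/-!
An LHV model is a mixture of local deterministic strategies: at a hidden state `ω` each party
gives at most one of the two outcomes for every setting, namely those whose events contain `ω`.
The functional `I₂₂₃₃` is linear in the joint and marginal probabilities, so it is the
`μ`-average of its value on the indicators at `ω`, and it suffices to check that this value is
nonpositive. Once Alice's responses are deterministic, `I₂₂₃₃` is linear in Bob's response
probabilities, so it is nonpositive as soon as they lie in the simplices `b k 0 + b k 1 ≤ 1`.
-/

open MeasureTheory

-- Indices are 0-based: the paper's `(i,j)` is `pairIdx (i-1) (j-1)`.
def pairIdx (i j : Fin 2) : Fin 4 :=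
  ⟨2 * i.val + j.val, by have := i.isLt; have := j.isLt; omega⟩

noncomputable def g2233 (i j k l : Fin 2) : ℝ :=
  !![(1 : ℝ), 1, 0, 1; 1, 0, 1, 1; 0, 1, 0, -1; 1, 1, -1, -1] (pairIdx i j) (pairIdx k l)

/-- `I₂₂₃₃` evaluated on joint probabilities `P i j k l` and marginals `pA i j`, `pB k l`. -/
noncomputable def bellI2233 (P : Fin 2 → Fin 2 → Fin 2 → Fin 2 → ℝ) (pA pB : Fin 2 → Fin 2 → ℝ) :
    ℝ :=
  (∑ i, ∑ j, ∑ k, ∑ l, g2233 i j k l * P i j k l) - pA 0 0 - pA 0 1 - pB 0 0 - pB 0 1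

lemma bellI2233_eq (P : Fin 2 → Fin 2 → Fin 2 → Fin 2 → ℝ) (pA pB : Fin 2 → Fin 2 → ℝ) :
    bellI2233 P pA pB =
      P 0 0 0 0 + P 0 0 0 1 + P 0 0 1 1 + P 0 1 0 0 + P 0 1 1 0 + P 0 1 1 1
        + P 1 0 0 1 - P 1 0 1 1 + P 1 1 0 0 + P 1 1 0 1 - P 1 1 1 0 - P 1 1 1 1
        - pA 0 0 - pA 0 1 - pB 0 0 - pB 0 1 := by
  simp only [bellI2233, g2233, pairIdx, Fin.sum_univ_two]
  norm_num
  ring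

lemma bellI2233_nonpos (a b : Fin 2 → Fin 2 → ℝ)
    (ha : ∀ i, a i 0 = 0 ∧ a i 1 = 0 ∨ a i 0 = 1 ∧ a i 1 = 0 ∨ a i 0 = 0 ∧ a i 1 = 1)
    (hb : ∀ k l, 0 ≤ b k l) (hb₁ : ∀ k, b k 0 + b k 1 ≤ 1) :
    bellI2233 (fun i j k l => a i j * b k l) a b ≤ 0 := by
  rw [bellI2233_eq]
  have := hb 0 0; have := hb 0 1; have := hb 1 0; have := hb 1 1
  have := hb₁ 0; have := hb₁ 1
  rcases ha 0 with ⟨h₀, h₁⟩ | ⟨h₀, h₁⟩ | ⟨h₀, h₁⟩ <;>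
    rcases ha 1 with ⟨h₂, h₃⟩ | ⟨h₂, h₃⟩ | ⟨h₂, h₃⟩ <;>
    simp only [h₀, h₁, h₂, h₃] <;> linarith

lemma integral_bellI2233 {Ω : Type*} [MeasurableSpace Ω] {μ : Measure Ω}
    {P : Ω → Fin 2 → Fin 2 → Fin 2 → Fin 2 → ℝ} {pA pB : Ω → Fin 2 → Fin 2 → ℝ}
    (hP : ∀ i j k l, Integrable (fun ω => P ω i j k l) μ)
    (hA : ∀ i j, Integrable (fun ω => pA ω i j) μ) (hB : ∀ k l, Integrable (fun ω => pB ω k l) μ) :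
    ∫ ω, bellI2233 (P ω) (pA ω) (pB ω) ∂μ =
      bellI2233 (fun i j k l => ∫ ω, P ω i j k l ∂μ) (fun i j => ∫ ω, pA ω i j ∂μ)
        (fun k l => ∫ ω, pB ω k l ∂μ) := by
  unfold bellI2233
  have := hA 0 0; have := hA 0 1; have := hB 0 0
  have hsum : Integrable (fun ω => ∑ i, ∑ j, ∑ k, ∑ l, g2233 i j k l * P ω i j k l) μ := by
    fun_prop
  rw [integral_sub (by fun_prop) (hB 0 1), integral_sub (by fun_prop) (hB 0 0),
    integral_sub (by fun_prop) (hA 0 1), integral_sub hsum (hA 0 0)]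
  simp (disch := fun_prop) only [integral_finsetSum, integral_const_mul]

lemma indicator_one_cases_of_inter_eq_empty {α : Type*} {s t : Set α} (h : s ∩ t = ∅) (x : α) :
    s.indicator (1 : α → ℝ) x = 0 ∧ t.indicator (1 : α → ℝ) x = 0 ∨
      s.indicator (1 : α → ℝ) x = 1 ∧ t.indicator (1 : α → ℝ) x = 0 ∨
      s.indicator (1 : α → ℝ) x = 0 ∧ t.indicator (1 : α → ℝ) x = 1 := by
  by_cases hs : x ∈ s <;> by_cases ht : x ∈ t <;> simp [hs, ht]
  exact (Set.eq_empty_iff_forall_notMem.1 h x) ⟨hs, ht⟩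

lemma indicator_one_add_indicator_one_le_one {α : Type*} {s t : Set α} (h : s ∩ t = ∅) (x : α) :
    s.indicator (1 : α → ℝ) x + t.indicator (1 : α → ℝ) x ≤ 1 := by
  rcases indicator_one_cases_of_inter_eq_empty h x with ⟨hs, ht⟩ | ⟨hs, ht⟩ | ⟨hs, ht⟩ <;>
    norm_num [hs, ht]

/-- The extreme Bell-type inequality `I₂₂₃₃ ≤ 0` (inequality (77)): for hidden-variable
events `E i j` (Alice, disjoint in `j` for each setting `i`) and `F k l` (Bob, disjoint
in `l` for each setting `k`) in a probability space `(Ω, μ)`,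
`∑ γ_{ik}^{(j,l)} μ(E_i^{(j)} ∩ F_k^{(l)}) − μ(E₁^{(1)}) − μ(E₁^{(2)}) − μ(F₁^{(1)}) −
μ(F₁^{(2)}) ≤ 0`. -/
theorem stmt_17 {Ω : Type*} [MeasurableSpace Ω] (μ : Measure Ω) [IsProbabilityMeasure μ]
    (E F : Fin 2 → Fin 2 → Set Ω)
    (hEm : ∀ i j, MeasurableSet (E i j)) (hFm : ∀ k l, MeasurableSet (F k l))
    (hEd : ∀ i, E i 0 ∩ E i 1 = ∅) (hFd : ∀ k, F k 0 ∩ F k 1 = ∅) :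
    (∑ i, ∑ j, ∑ k, ∑ l, g2233 i j k l * (μ (E i j ∩ F k l)).toReal)
      - (μ (E 0 0)).toReal - (μ (E 0 1)).toReal
      - (μ (F 0 0)).toReal - (μ (F 0 1)).toReal ≤ 0 := by
  have hint : ∀ s, MeasurableSet s → Integrable (s.indicator (1 : Ω → ℝ)) μ :=
    fun s hs => (integrable_const 1).indicator hs
  have hpoint : ∀ ω, bellI2233 (fun i j k l => (E i j ∩ F k l).indicator 1 ω)
      (fun i j => (E i j).indicator 1 ω) (fun k l => (F k l).indicator 1 ω) ≤ 0 := by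
    intro ω
    simp only [Set.inter_indicator_one, Pi.mul_apply]
    exact bellI2233_nonpos _ _ (fun i => indicator_one_cases_of_inter_eq_empty (hEd i) ω)
      (fun k l => Set.indicator_nonneg (fun _ _ => zero_le_one) ω)
      (fun k => indicator_one_add_indicator_one_le_one (hFd k) ω)
  calc _ = ∫ ω, bellI2233 (fun i j k l => (E i j ∩ F k l).indicator 1 ω)
          (fun i j => (E i j).indicator 1 ω) (fun k l => (F k l).indicator 1 ω) ∂μ := by
        rw [integral_bellI2233 (fun i j k l => hint _ ((hEm i j).inter (hFm k l)))
          (fun i j => hint _ (hEm i j)) (fun k l => hint _ (hFm k l))]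
        simp only [integral_indicator_one ((hEm _ _).inter (hFm _ _)),
          integral_indicator_one (hEm _ _), integral_indicator_one (hFm _ _)]
        rfl
    _ ≤ 0 := integral_nonpos hpoint
end

section
/- Let (Ω, μ) be a probability space, let (L, ≤) be a linearly ordered set with a measurable-space structure making the order relation measurable, and let A_1, A_2, B_1, B_2 : Ω → L be measurable maps (A_s is Alice's outcome under setting s, B_s is Bob's outcome under setting s). Then μ({ω : B_1(ω) ≥ A_1(ω)}) + μ({ω : A_1(ω) ≥ B_2(ω)}) + μ({ω : B_2(ω) ≥ A_2(ω)}) + μ({ω : A_2(ω) ≥ B_1(ω)}) ≥ 1. -/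
open MeasureTheory

/-! Pointwise, the four non-strict comparisons cannot all fail: otherwise
`B₁ < A₁ < B₂ < A₂ < B₁`. So the four events cover `Ω`, and subadditivity of `μ` gives the
bound. -/

theorem le_or_le_or_le_or_le_of_linearOrder {L : Type*} [LinearOrder L] (a₁ b₁ a₂ b₂ : L) :
    a₁ ≤ b₁ ∨ b₂ ≤ a₁ ∨ a₂ ≤ b₂ ∨ b₁ ≤ a₂ := by
  by_contra! h
  obtain ⟨h₁, h₂, h₃, h₄⟩ := h
  exact lt_irrefl b₁ (h₁.trans (h₂.trans (h₃.trans h₄)))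

theorem one_le_sum_measureReal_of_iUnion_eq_univ {Ω ι : Type*} [MeasurableSpace Ω] [Fintype ι]
    (μ : Measure Ω) [IsProbabilityMeasure μ] (s : ι → Set Ω) (hs : ⋃ i, s i = Set.univ) :
    1 ≤ ∑ i, μ.real (s i) :=
  calc 1 = μ.real (⋃ i, s i) := by rw [hs, probReal_univ]
    _ ≤ ∑ i, μ.real (s i) := measureReal_iUnion_fintype_le s

theorem stmt_19_general {Ω : Type*} [MeasurableSpace Ω] (μ : Measure Ω) [IsProbabilityMeasure μ]
    {L : Type*} [LinearOrder L]
    (A B : Fin 2 → Ω → L) :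
    1 ≤ (μ {ω | A 0 ω ≤ B 0 ω}).toReal + (μ {ω | B 1 ω ≤ A 0 ω}).toReal +
        (μ {ω | A 1 ω ≤ B 1 ω}).toReal + (μ {ω | B 0 ω ≤ A 1 ω}).toReal := by
  have hcover : ⋃ i, ![{ω | A 0 ω ≤ B 0 ω}, {ω | B 1 ω ≤ A 0 ω}, {ω | A 1 ω ≤ B 1 ω},
      {ω | B 0 ω ≤ A 1 ω}] i = Set.univ := by
    refine Set.eq_univ_of_forall fun ω => ?_
    simpa [Fin.exists_fin_succ] using
      le_or_le_or_le_or_le_of_linearOrder (A 0 ω) (B 0 ω) (A 1 ω) (B 1 ω)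
  simpa [Fin.sum_univ_four, Measure.real, add_assoc] using
    one_le_sum_measureReal_of_iUnion_eq_univ μ _ hcover

/-- The Zohren-Gill tight LHV inequality (84'): for an LHV model `(Ω, μ)` with measurable
outcome maps `A s` (Alice) and `B s` (Bob), `s ∈ {1,2}` (0-indexed), into a linearly
ordered measurable space `L` with measurable order relation,
`μ(B₁ ≥ A₁) + μ(A₁ ≥ B₂) + μ(B₂ ≥ A₂) + μ(A₂ ≥ B₁) ≥ 1`. -/
theorem stmt_19 {Ω : Type*} [MeasurableSpace Ω] (μ : Measure Ω) [IsProbabilityMeasure μ]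
    {L : Type*} [LinearOrder L] [MeasurableSpace L]
    (hord : MeasurableSet {p : L × L | p.1 ≤ p.2})
    (A B : Fin 2 → Ω → L)
    (hA : ∀ s, Measurable (A s)) (hB : ∀ s, Measurable (B s)) :
    1 ≤ (μ {ω | A 0 ω ≤ B 0 ω}).toReal + (μ {ω | B 1 ω ≤ A 0 ω}).toReal +
        (μ {ω | A 1 ω ≤ B 1 ω}).toReal + (μ {ω | B 0 ω ≤ A 1 ω}).toReal :=
  stmt_19_general μ A B
end
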